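/- arXiv:1703.08979 — 8 statements merged into one kernel-verified Lean document; each statement's English description precedes it below -/
import Mathlib

section
/- Let r ≥ 1 and let X be a finite set of cardinality 2r. Let α and β be fixed-point-free involutions of X (pairings). Then the number of orbits of the natural action on X of the subgroup of the permutation group of X generated by α and β equals #(α∘β)/2; equivalently, it equals r − |α∘β|/2. -/
/-- The number of cycles of a permutation `σ` of a finite set `X`:
the number of orbits on `X` of the cyclic group generated by `σ`
(cycles counted including fixed points). -/
noncomputable def permCycles {X : Type*} (σ : Equiv.Perm X) : ℕ :=
  Nat.card (MulAction.orbitRel.Quotient (Subgroup.zpowers σ) X)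

/-- The length `|σ| = card X - #σ` of a permutation. -/
noncomputable def permLength {X : Type*} (σ : Equiv.Perm X) : ℕ :=
  Nat.card X - permCycles σ

/-- A pairing of `X` is a fixed-point-free involution of `X`. -/
def IsPairing {X : Type*} (α : Equiv.Perm X) : Prop :=
  α * α = 1 ∧ ∀ x, α x ≠ x


/-!
Write `c = αβ`. Conjugation by `α` inverts `c`, so `⟨α, β⟩` is dihedral: each of its elements is
`cᵏ` or `cᵏα`. Hence the `⟨α, β⟩`-orbit of `x` is the union of the `c`-orbits of `x` and `αx`.
These two `c`-orbits are distinct: `cᵏx = αx` would make `α` fix `cʲx` (if `k = 2j`) or `β` fix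
`cʲx` (if `k = 2j + 1`). So `#(αβ)` is twice the number of `⟨α, β⟩`-orbits, and since
`#(αβ) ≤ card X` the second formula follows from the first.
-/

open MulAction Subgroup

theorem Nat.card_eq_mul_of_forall_card_fiber_eq {A B : Type*} [Finite A] [Finite B] {f : A → B}
    {n : ℕ} (hf : ∀ b, Nat.card {a // f a = b} = n) : Nat.card A = n * Nat.card B := by
  have := Fintype.ofFinite B
  rw [← Nat.card_congr (Equiv.sigmaFiberEquiv f), Nat.card_sigma]
  simp [hf, Finset.sum_const, mul_comm]

section Involutions

variable {G : Type*} [Group G] {a b : G}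

theorem mul_zpow_eq_zpow_neg_mul_of_mul_self_eq_one (ha : a * a = 1) (hb : b * b = 1) (k : ℤ) :
    a * (a * b) ^ k = (a * b) ^ (-k) * a := by
  have hconj : SemiconjBy a (a * b) (a * b)⁻¹ := by
    rw [SemiconjBy, ← mul_assoc, ha, one_mul, mul_inv_rev, inv_eq_of_mul_eq_one_right ha,
      inv_eq_of_mul_eq_one_right hb, mul_assoc, ha, mul_one]
  have := hconj.zpow_right k
  rwa [SemiconjBy, inv_zpow, ← zpow_neg] at this

theorem mem_closure_pair_iff_of_mul_self_eq_one (ha : a * a = 1) (hb : b * b = 1) {g : G} :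
    g ∈ closure {a, b} ↔ ∃ k : ℤ, g = (a * b) ^ k ∨ g = (a * b) ^ k * a := by
  have hconj := mul_zpow_eq_zpow_neg_mul_of_mul_self_eq_one ha hb
  constructor
  · intro hg
    induction hg using closure_induction with
    | mem g hg =>
      rcases hg with rfl | rfl
      · exact ⟨0, .inr (by simp)⟩
      · refine ⟨-1, .inr ?_⟩
        rw [zpow_neg_one, mul_inv_rev, inv_eq_of_mul_eq_one_right ha, mul_assoc, ha, mul_one,
          inv_eq_of_mul_eq_one_right hb]
    | one => exact ⟨0, .inl (by simp)⟩
    | mul g h _ _ ihg ihh =>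
      obtain ⟨i, rfl | rfl⟩ := ihg
      · obtain ⟨j, rfl | rfl⟩ := ihh
        · exact ⟨i + j, .inl (zpow_add _ _ _).symm⟩
        · exact ⟨i + j, .inr (by rw [zpow_add, mul_assoc])⟩
      · obtain ⟨j, rfl | rfl⟩ := ihh
        · exact ⟨i - j, .inr (by rw [mul_assoc, hconj, ← mul_assoc, ← zpow_add, sub_eq_add_neg])⟩
        · refine ⟨i - j, .inl ?_⟩
          rw [mul_assoc, ← mul_assoc a, hconj, mul_assoc, ha, mul_one, ← zpow_add,
            sub_eq_add_neg]
    | inv g _ ih =>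
      obtain ⟨k, rfl | rfl⟩ := ih
      · exact ⟨-k, .inl (zpow_neg _ _).symm⟩
      · refine ⟨k, .inr ?_⟩
        rw [mul_inv_rev, inv_eq_of_mul_eq_one_right ha, ← zpow_neg, hconj, neg_neg]
  · have hab : a * b ∈ closure {a, b} :=
      mul_mem (subset_closure (by simp)) (subset_closure (by simp))
    rintro ⟨k, rfl | rfl⟩
    · exact zpow_mem hab k
    · exact mul_mem (zpow_mem hab k) (subset_closure (by simp))

variable {X : Type*} [MulAction G X]

theorem mem_orbit_zpowers_iff {c : G} {x y : X} :
    y ∈ orbit (zpowers c) x ↔ ∃ k : ℤ, c ^ k • x = y := by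
  simp only [mem_orbit_iff, Subtype.exists, mk_smul, mem_zpowers_iff, exists_prop,
    exists_exists_eq_and]

theorem mem_orbit_closure_pair_iff_of_mul_self_eq_one (ha : a * a = 1) (hb : b * b = 1)
    {x y : X} : y ∈ orbit (closure {a, b}) x ↔
      y ∈ orbit (zpowers (a * b)) x ∨ y ∈ orbit (zpowers (a * b)) (a • x) := by
  rw [mem_orbit_zpowers_iff, mem_orbit_zpowers_iff]
  simp only [mem_orbit_iff, Subtype.exists, mk_smul, exists_prop,
    mem_closure_pair_iff_of_mul_self_eq_one ha hb]
  constructor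
  · rintro ⟨g, ⟨k, rfl | rfl⟩, rfl⟩
    · exact .inl ⟨k, rfl⟩
    · exact .inr ⟨k, (mul_smul _ _ _).symm⟩
  · rintro (⟨k, rfl⟩ | ⟨k, rfl⟩)
    · exact ⟨_, ⟨k, .inl rfl⟩, rfl⟩
    · exact ⟨_, ⟨k, .inr rfl⟩, mul_smul _ _ _⟩

theorem zpow_mul_smul_ne_smul (ha : a * a = 1) (hb : b * b = 1) (hax : ∀ x : X, a • x ≠ x)
    (hbx : ∀ x : X, b • x ≠ x) (k : ℤ) (x : X) : (a * b) ^ k • x ≠ a • x := by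
  have hconj (j : ℤ) : a • (a * b) ^ j • x = (a * b) ^ (-j) • a • x := by
    rw [← mul_smul, mul_zpow_eq_zpow_neg_mul_of_mul_self_eq_one ha hb, mul_smul]
  intro hk
  obtain ⟨j, rfl | rfl⟩ := Int.even_or_odd' k
  · apply hax ((a * b) ^ j • x)
    rw [hconj, ← hk, ← mul_smul, ← zpow_add, show -j + 2 * j = j by ring]
  · apply hbx ((a * b) ^ j • x)
    have hsucc : a • b • (a * b) ^ j • x = (a * b) ^ (j + 1) • x := by
      rw [add_comm, zpow_one_add, mul_smul, mul_smul]
    have hsucc' : a • (a * b) ^ j • x = (a * b) ^ (j + 1) • x := by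
      rw [hconj, ← hk, ← mul_smul, ← zpow_add, show -j + (2 * j + 1) = j + 1 by ring]
    exact (smul_left_cancel_iff a).mp (hsucc.trans hsucc'.symm)

theorem card_orbitRel_quotient_zpowers_mul_eq_two_mul [Finite X] (ha : a * a = 1) (hb : b * b = 1) (hax : ∀ x : X, a • x ≠ x)
    (hbx : ∀ x : X, b • x ≠ x) :
    Nat.card (orbitRel.Quotient (zpowers (a * b)) X)
      = 2 * Nat.card (orbitRel.Quotient (closure {a, b}) X) := by
  let f : orbitRel.Quotient (zpowers (a * b)) X → orbitRel.Quotient (closure {a, b}) X :=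
    Quotient.map' id fun _ _ h ↦
      (mem_orbit_closure_pair_iff_of_mul_self_eq_one ha hb).mpr (.inl h)
  refine Nat.card_eq_mul_of_forall_card_fiber_eq (f := f) fun q ↦ ?_
  induction q using Quotient.inductionOn' with
  | h x =>
    have hfiber : {p | f p = Quotient.mk'' x} = {Quotient.mk'' x, Quotient.mk'' (a • x)} := by
      ext p
      induction p using Quotient.inductionOn' with
      | h y =>
        simp only [Set.mem_ofPred_eq, Set.mem_insert_iff, Set.mem_singleton_iff, Quotient.eq'',
          orbitRel_apply]
        exact Quotient.eq''.trans (orbitRel_apply.trans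
          (mem_orbit_closure_pair_iff_of_mul_self_eq_one ha hb))
    have hne : (Quotient.mk'' (a • x) : orbitRel.Quotient (zpowers (a * b)) X)
        ≠ Quotient.mk'' x := by
      rw [Ne, Quotient.eq'', orbitRel_apply, mem_orbit_zpowers_iff, not_exists]
      exact fun k ↦ zpow_mul_smul_ne_smul ha hb hax hbx k x
    rw [← Set.ncard_pair hne.symm, ← hfiber, ← Nat.card_coe_set_eq]
    rfl

end Involutions

theorem stmt0_general {X : Type*} [Fintype X] (r : ℕ) (hX : Nat.card X = 2 * r)
    (α β : Equiv.Perm X) (hα : IsPairing α) (hβ : IsPairing β) :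
    Nat.card (MulAction.orbitRel.Quotient
        (Subgroup.closure {α, β} : Subgroup (Equiv.Perm X)) X)
      = permCycles (α * β) / 2 ∧
    Nat.card (MulAction.orbitRel.Quotient
        (Subgroup.closure {α, β} : Subgroup (Equiv.Perm X)) X)
      = r - permLength (α * β) / 2 := by
  have hcycles : permCycles (α * β) = 2 * Nat.card (orbitRel.Quotient (closure {α, β}) X) :=
    card_orbitRel_quotient_zpowers_mul_eq_two_mul hα.1 hβ.1 hα.2 hβ.2
  have hle : permCycles (α * β) ≤ Nat.card X :=
    Nat.card_le_card_of_surjective _ Quotient.mk''_surjective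
  unfold permLength
  omega

theorem stmt0 {X : Type*} [Fintype X] (r : ℕ) (hr : 1 ≤ r) (hX : Nat.card X = 2 * r)
    (α β : Equiv.Perm X) (hα : IsPairing α) (hβ : IsPairing β) :
    Nat.card (MulAction.orbitRel.Quotient
        (Subgroup.closure {α, β} : Subgroup (Equiv.Perm X)) X)
      = permCycles (α * β) / 2 ∧
    Nat.card (MulAction.orbitRel.Quotient
        (Subgroup.closure {α, β} : Subgroup (Equiv.Perm X)) X)
      = r - permLength (α * β) / 2 :=
  stmt0_general r hX α β hα hβ
end

section
/- Let X be a finite set and let α and β be fixed-point-free involutions of X. Then for every x ∈ X and every integer l, (α∘β)^l x ≠ α x; that is, α x never lies in the orbit of x under the cyclic group generated by α∘β. -/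
theorem stmt2 {X : Type*} [Fintype X] (α β : Equiv.Perm X)
    (hα : IsPairing α) (hβ : IsPairing β) (x : X) (l : ℤ) :
    ((α * β) ^ l) x ≠ α x := by
  obtain ⟨hα1, hα2⟩ := hα
  obtain ⟨hβ1, hβ2⟩ := hβ
  set g := α * β with hg
  have hαinv : α⁻¹ = α := by rw [eq_comm, eq_inv_iff_mul_eq_one]; exact hα1
  have hβinv : β⁻¹ = β := by rw [eq_comm, eq_inv_iff_mul_eq_one]; exact hβ1
  have hginv : g⁻¹ = β * α := by rw [hg, mul_inv_rev, hαinv, hβinv]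
  have hscα : SemiconjBy α g g⁻¹ := by
    show α * g = g⁻¹ * α
    rw [hginv, hg, ← mul_assoc, hα1, one_mul, mul_assoc, hα1, mul_one]
  have hscβ : SemiconjBy β g g⁻¹ := by
    show β * g = g⁻¹ * β
    rw [hginv, hg, mul_assoc]
  have hαg : ∀ (k : ℤ) (y : X), α ((g ^ k) y) = (g ^ (-k)) (α y) := by
    intro k y
    have h := (hscα.zpow_right k).eq
    rw [inv_zpow, ← zpow_neg] at h
    calc α ((g ^ k) y) = (α * g ^ k) y := rfl
    _ = (g ^ (-k) * α) y := by rw [h]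
    _ = (g ^ (-k)) (α y) := rfl
  have hβg : ∀ (k : ℤ) (y : X), β ((g ^ k) y) = (g ^ (-k)) (β y) := by
    intro k y
    have h := (hscβ.zpow_right k).eq
    rw [inv_zpow, ← zpow_neg] at h
    calc β ((g ^ k) y) = (β * g ^ k) y := rfl
    _ = (g ^ (-k) * β) y := by rw [h]
    _ = (g ^ (-k)) (β y) := rfl
  have hcomp : ∀ (a b : ℤ) (y : X), (g ^ a) ((g ^ b) y) = (g ^ (a + b)) y := by
    intro a b y
    rw [zpow_add]
    rfl
  intro h
  rcases Int.even_or_odd l with ⟨m, hm⟩ | ⟨m, hm⟩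
  · -- even case: α fixes g^m x
    apply hα2 ((g ^ m) x)
    rw [hαg m x, ← h, hm, hcomp]
    congr 1
    ring
  · -- odd case: β fixes g^m x
    -- first: β x = g^(2m) x
    have hβx : β x = (g ^ (2 * m)) x := by
      have h1 : β ((g ^ l) x) = β (α x) := congrArg β h
      rw [hβg l x] at h1
      have h2 : β (α x) = (g ^ (-1 : ℤ)) x := by
        have : (β * α) x = (g ^ (-1 : ℤ)) x := by rw [← hginv, zpow_neg_one]
        exact this
      rw [h2] at h1
      have h3 := congrArg (g ^ l) h1
      rw [hcomp, hcomp] at h3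
      rw [add_neg_cancel, zpow_zero] at h3
      have : l + -1 = 2 * m := by omega
      rw [this] at h3
      exact h3
    apply hβ2 ((g ^ m) x)
    rw [hβg m x, hβx, hcomp]
    congr 1
    ring
end

section
/- Let X be a finite set and let α and β be fixed-point-free involutions of X. Then for every integer ℓ ≥ 1, the number of orbits of the cyclic group generated by α∘β on X having cardinality exactly ℓ is even. In particular the total number of such orbits (the number of cycles of α∘β, counting fixed points) is even. -/
private lemma aux_finset_even {Y : Type*} [DecidableEq Y] (f : Y → Y)
    (hinv : Function.Involutive f) (hff : ∀ y, f y ≠ y) :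
    ∀ s : Finset Y, (∀ x ∈ s, f x ∈ s) → Even s.card := by
  intro s
  induction s using Finset.strongInduction with
  | _ s ih =>
    intro hs
    rcases s.eq_empty_or_nonempty with rfl | ⟨x, hx⟩
    · simp
    · have hfx : f x ∈ s := hs x hx
      set t := (s.erase x).erase (f x) with ht
      have hts : t ⊂ s :=
        Finset.ssubset_of_subset_of_ssubset (Finset.erase_subset _ _)
          (Finset.erase_ssubset hx)
      have htc : ∀ y ∈ t, f y ∈ t := by
        intro y hy
        simp only [ht, Finset.mem_erase] at hy ⊢
        obtain ⟨hy1, hy2, hy3⟩ := hy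
        exact ⟨fun h => hy2 (hinv.injective h), fun h => hy1 (by rw [← h, hinv y]),
          hs y hy3⟩
      have hcard : s.card = t.card + 2 := by
        have h1 : (s.erase x).card = s.card - 1 := Finset.card_erase_of_mem hx
        have h2 : t.card = (s.erase x).card - 1 :=
          Finset.card_erase_of_mem (Finset.mem_erase.2 ⟨hff x, hfx⟩)
        have hpos : 1 ≤ s.card := Finset.card_pos.2 ⟨x, hx⟩
        have hpos2 : 1 ≤ (s.erase x).card :=
          Finset.card_pos.2 ⟨f x, Finset.mem_erase.2 ⟨hff x, hfx⟩⟩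
        omega
      rw [hcard]
      exact (ih t hts htc).add even_two

private lemma aux_even_card {Y : Type*} [Finite Y] (f : Y → Y)
    (hinv : Function.Involutive f) (hff : ∀ y, f y ≠ y) : Even (Nat.card Y) := by
  classical
  cases nonempty_fintype Y
  rw [Nat.card_eq_fintype_card, ← Finset.card_univ]
  exact aux_finset_even f hinv hff Finset.univ (fun x _ => Finset.mem_univ _)

theorem stmt4 {X : Type*} [Fintype X] (α β : Equiv.Perm X)
    (hα : IsPairing α) (hβ : IsPairing β) :
    (∀ l : ℕ, 1 ≤ l →
      Even (Nat.card {o : MulAction.orbitRel.Quotient (Subgroup.zpowers (α * β)) X //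
        Nat.card o.orbit = l})) ∧
    Even (Nat.card (MulAction.orbitRel.Quotient (Subgroup.zpowers (α * β)) X)) := by
  classical
  obtain ⟨hα1, hα2⟩ := hα
  obtain ⟨hβ1, hβ2⟩ := hβ
  set g : Equiv.Perm X := α * β with hg
  have hαi : α⁻¹ = α := inv_eq_of_mul_eq_one_right hα1
  have hβi : β⁻¹ = β := inv_eq_of_mul_eq_one_right hβ1
  have hconj : α * g * α⁻¹ = g⁻¹ := by
    rw [hg, hαi, mul_inv_rev, hαi, hβi, ← mul_assoc α α β, hα1, one_mul]
  have hk : ∀ k : ℤ, α * g ^ k = g ^ (-k) * α := by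
    intro k
    have : (g ^ (-k) : Equiv.Perm X) = α * g ^ k * α⁻¹ := by
      rw [conj_zpow.symm, hconj, zpow_neg, inv_zpow]
    rw [this, inv_mul_cancel_right]
  have hpt : ∀ (k : ℤ) (x : X), α ((g ^ k) x) = (g ^ (-k)) (α x) := by
    intro k x
    have := congrArg (fun p : Equiv.Perm X => p x) (hk k)
    simpa using this
  -- membership in orbits
  have hmem : ∀ x y : X, y ∈ MulAction.orbit (Subgroup.zpowers g) x ↔ ∃ k : ℤ, (g ^ k) x = y := by
    intro x y
    constructor
    · rintro ⟨⟨h, hh⟩, rfl⟩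
      obtain ⟨k, rfl⟩ := Subgroup.mem_zpowers_iff.1 hh
      exact ⟨k, rfl⟩
    · rintro ⟨k, rfl⟩
      exact ⟨⟨g ^ k, Subgroup.mem_zpowers_iff.2 ⟨k, rfl⟩⟩, rfl⟩
  -- α respects the orbit relation
  have hresp : ∀ a b : X, (MulAction.orbitRel (Subgroup.zpowers g) X).r a b →
      (MulAction.orbitRel (Subgroup.zpowers g) X).r (α a) (α b) := by
    intro a b hab
    have : a ∈ MulAction.orbit (Subgroup.zpowers g) b := hab
    obtain ⟨k, rfl⟩ := (hmem b a).1 this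
    show α ((g ^ k) b) ∈ MulAction.orbit (Subgroup.zpowers g) (α b)
    exact (hmem (α b) _).2 ⟨-k, (hpt k b).symm⟩
  -- the fixed-point-free property on orbits
  have hkey : ∀ x : X, α x ∉ MulAction.orbit (Subgroup.zpowers g) x := by
    intro x hx
    obtain ⟨k, hkx⟩ := (hmem x (α x)).1 hx
    rcases Int.even_or_odd k with ⟨j, hj⟩ | ⟨j, hj⟩
    · -- k = 2j : α fixes g^j x
      apply hα2 ((g ^ j) x)
      have := hpt j x
      rw [this, ← hkx]
      have : (g ^ (-j)) ((g ^ k) x) = (g ^ j) x := by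
        rw [← Equiv.Perm.mul_apply, ← zpow_add]
        congr 1
        rw [hj]; ring_nf
      exact this
    · -- k = 2j + 1 : β fixes g^j x
      apply hβ2 ((g ^ j) x)
      have hβg : β = α * g := by rw [hg, ← mul_assoc, hα1, one_mul]
      have h1 : β ((g ^ j) x) = α ((g ^ (1 + j)) x) := by
        rw [hβg]
        rw [Equiv.Perm.mul_apply]
        congr 1
        rw [← Equiv.Perm.mul_apply, ← zpow_one_add]
      rw [h1, hpt (1 + j) x, ← hkx, ← Equiv.Perm.mul_apply, ← zpow_add]
      congr 1
      rw [hj]; ring_nf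
  -- induced involution on the quotient
  set Q := MulAction.orbitRel.Quotient (Subgroup.zpowers g) X with hQ
  let σ : Q → Q := Quotient.map' α hresp
  have hσmk : ∀ x : X, σ (Quotient.mk'' x) = Quotient.mk'' (α x) := fun x => rfl
  have hσinv : Function.Involutive σ := by
    intro o
    induction o using Quotient.inductionOn' with
    | h x =>
      rw [hσmk, hσmk]
      have : α (α x) = x := by
        have := congrArg (fun p : Equiv.Perm X => p x) hα1
        simpa using this
      rw [this]
  have hσff : ∀ o : Q, σ o ≠ o := by
    intro o
    induction o using Quotient.inductionOn' with
    | h x =>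
      rw [hσmk]
      intro h
      exact hkey x (Quotient.exact' h)
  -- orbit cardinality is preserved
  have horb : ∀ x : X, MulAction.orbit (Subgroup.zpowers g) (α x) =
      α '' MulAction.orbit (Subgroup.zpowers g) x := by
    intro x
    ext y
    rw [hmem]
    constructor
    · rintro ⟨k, rfl⟩
      exact ⟨(g ^ (-k)) x, (hmem x _).2 ⟨-k, rfl⟩, by rw [hpt (-k) x, neg_neg]⟩
    · rintro ⟨z, hz, rfl⟩
      obtain ⟨k, rfl⟩ := (hmem x z).1 hz
      exact ⟨-k, by rw [hpt k x]⟩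
  have hcardorb : ∀ o : Q, Nat.card (σ o).orbit = Nat.card o.orbit := by
    intro o
    induction o using Quotient.inductionOn' with
    | h x =>
      rw [hσmk, MulAction.orbitRel.Quotient.orbit_mk, MulAction.orbitRel.Quotient.orbit_mk,
        horb x]
      rw [Nat.card_coe_set_eq, Nat.card_coe_set_eq,
        Set.ncard_image_of_injective _ α.injective]
  have : Finite Q := Quotient.finite _
  constructor
  · intro l _
    let τ : {o : Q // Nat.card o.orbit = l} → {o : Q // Nat.card o.orbit = l} :=
      fun p => ⟨σ p.1, by rw [hcardorb, p.2]⟩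
    exact aux_even_card τ (fun p => Subtype.ext (hσinv p.1))
      (fun p h => hσff p.1 (congrArg Subtype.val h))
  · exact aux_even_card σ hσinv hσff
end

section
/- Let q ≥ 1 and X = Fin q ⊕ Fin q. Then for every pairing β of X and every transverse pairing τ of X, b_R(β) ≤ |τ∘β|. -/
/-- A pairing of `Fin q ⊕ Fin q` is transverse if it sends the L side to the R side. -/
def IsTransverse {q : ℕ} (τ : Equiv.Perm (Fin q ⊕ Fin q)) : Prop :=
  ∀ i : Fin q, (τ (Sum.inl i)).isRight

/-- `b_R(β)`: the number of R-side elements paired to R-side elements (twice the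
number of bumps of `β`). -/
def bR {q : ℕ} (β : Equiv.Perm (Fin q ⊕ Fin q)) : ℕ :=
  (Finset.univ.filter fun i : Fin q => (β (Sum.inr i)).isRight).card

/-!
If `σ` maps a set `S` of points into its complement, every cycle of `σ` meets `Sᶜ`, so
`#σ ≤ card Sᶜ`, i.e. `card S ≤ |σ|`. Take for `S` the R-side points `x` with `β x` R-side.
A transverse `τ` maps the L side onto the R side, hence the R side into the L side, so
`(τ * β) x = τ (β x)` is L-side for `x ∈ S`, and `card S = b_R(β)`.
-/

open Equiv Finset

section

variable {X : Type*} [Fintype X] [DecidableEq X]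

theorem permCycles_le_card_compl (σ : Perm X) (S : Finset X) (hS : ∀ x ∈ S, σ x ∉ S) :
    permCycles σ ≤ Sᶜ.card := by
  have hsurj : Function.Surjective fun x : (Sᶜ : Finset X) =>
      (Quotient.mk'' x.1 : MulAction.orbitRel.Quotient (Subgroup.zpowers σ) X) := by
    intro c
    by_cases hc : c.out ∈ S
    · refine ⟨⟨σ c.out, mem_compl.2 (hS _ hc)⟩, .trans ?_ c.out_eq'⟩
      exact Quotient.sound' ⟨⟨σ, Subgroup.mem_zpowers σ⟩, rfl⟩
    · exact ⟨⟨c.out, mem_compl.2 hc⟩, c.out_eq'⟩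
  exact (Nat.card_le_card_of_surjective _ hsurj).trans_eq (Nat.card_eq_finsetCard _)

theorem card_le_permLength (σ : Perm X) (S : Finset X) (hS : ∀ x ∈ S, σ x ∉ S) :
    S.card ≤ permLength σ := by
  have hcycles := permCycles_le_card_compl σ S hS
  rw [card_compl] at hcycles
  rw [permLength, Nat.card_eq_fintype_card]
  have hS_le := S.card_le_univ
  omega

end

theorem Equiv.Perm.isLeft_apply_inr_of_isRight_apply_inl {α : Type*} [Finite α]
    (τ : Perm (α ⊕ α)) (hτ : ∀ a, (τ (.inl a)).isRight) (a : α) : (τ (.inr a)).isLeft := by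
  set f : α → α := fun c => (τ (.inl c)).getRight (hτ c)
  have hf : ∀ c, τ (.inl c) = .inr (f c) := fun c => (Sum.inr_getRight _ _).symm
  have hfsurj : Function.Surjective f :=
    Finite.injective_iff_surjective.1 fun c d h =>
      Sum.inl_injective (τ.injective (by rw [hf, hf, h]))
  rcases h : τ (.inr a) with b | b
  · rfl
  · obtain ⟨c, rfl⟩ := hfsurj b
    exact absurd (τ.injective (h.trans (hf c).symm)) Sum.inr_ne_inl

theorem stmt5_general (q : ℕ) (β τ : Equiv.Perm (Fin q ⊕ Fin q))
    (hτt : IsTransverse τ) :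
    bR β ≤ permLength (τ * β) := by
  set S := (univ.filter fun i : Fin q => (β (.inr i)).isRight).map Function.Embedding.inr
  have hS : ∀ x ∈ S, (τ * β) x ∉ S := by
    simp only [S, mem_map, mem_filter, Function.Embedding.inr_apply]
    rintro _ ⟨i, ⟨-, hi⟩, rfl⟩ ⟨j, -, hj⟩
    rcases hβi : β (.inr i) with b | b
    · simp [hβi] at hi
    · have := τ.isLeft_apply_inr_of_isRight_apply_inl hτt b
      rw [Perm.mul_apply, hβi] at hj
      simp [← hj] at this
  exact (card_map _).symm.trans_le (card_le_permLength _ S hS)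

theorem stmt5 (q : ℕ) (hq : 1 ≤ q) (β τ : Equiv.Perm (Fin q ⊕ Fin q))
    (hβ : IsPairing β) (hτ : IsPairing τ) (hτt : IsTransverse τ) :
    bR β ≤ permLength (τ * β) :=
  stmt5_general q β τ hτt
end

section
/- Let q ≥ 1 and X = Fin q ⊕ Fin q, and let β be a pairing of X. Then there exists a transverse pairing τ of X with |τ∘β| = b_R(β). Consequently, the minimum of |τ∘β| over all transverse pairings τ equals b_R(β) = 2♭(β). -/
open Finset MulAction Equiv

lemma orbitRel_mk_apply {X : Type*} (σ : Perm X) (x : X) :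
    (Quotient.mk'' (σ x) : orbitRel.Quotient (Subgroup.zpowers σ) X) = Quotient.mk'' x :=
  Quotient.sound' <| orbitRel_apply.2 ⟨⟨σ, Subgroup.mem_zpowers σ⟩, rfl⟩

lemma eq_or_eq_apply_of_orbitRel_mk_eq {X : Type*} {σ : Perm X} (h : σ * σ = 1) {x y : X}
    (hxy : (Quotient.mk'' y : orbitRel.Quotient (Subgroup.zpowers σ) X) = Quotient.mk'' x) :
    y = x ∨ y = σ x := by
  obtain ⟨⟨g, hg⟩, rfl⟩ := Quotient.exact' hxy
  obtain ⟨n, rfl⟩ := Subgroup.mem_zpowers_iff.1 hg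
  change (σ ^ n) x = x ∨ (σ ^ n) x = σ x
  rw [zpow_eq_zpow_emod' n (by rwa [pow_two] : σ ^ 2 = 1)]
  rcases Int.emod_two_eq_zero_or_one n with hn | hn <;> simp [hn]

section Orbits

variable {X : Type*} [Fintype X] (σ : Perm X)

noncomputable instance : Fintype (orbitRel.Quotient (Subgroup.zpowers σ) X) :=
  @Fintype.ofFinite _ (Quotient.finite _)

noncomputable instance : DecidableEq (orbitRel.Quotient (Subgroup.zpowers σ) X) :=
  Classical.decEq _

noncomputable def orbitFinset (ω : orbitRel.Quotient (Subgroup.zpowers σ) X) : Finset X :=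
  {x | (Quotient.mk'' x : orbitRel.Quotient (Subgroup.zpowers σ) X) = ω}

variable {σ} in
lemma mem_orbitFinset {x : X} {ω : orbitRel.Quotient (Subgroup.zpowers σ) X} :
    x ∈ orbitFinset σ ω ↔ Quotient.mk'' x = ω := by
  simp [orbitFinset]

lemma orbitFinset_nonempty (ω : orbitRel.Quotient (Subgroup.zpowers σ) X) :
    (orbitFinset σ ω).Nonempty :=
  ⟨ω.out, mem_orbitFinset.2 ω.out_eq'⟩

lemma card_filter_eq_sum_orbitFinset (p : X → Prop) [DecidablePred p] :
    #{x | p x} = ∑ ω, #{x ∈ orbitFinset σ ω | p x} := by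
  rw [card_eq_sum_card_fiberwise (f := fun x => (Quotient.mk'' x : orbitRel.Quotient
    (Subgroup.zpowers σ) X)) (t := univ) fun _ _ => mem_univ _]
  refine sum_congr rfl fun ω _ => congrArg card ?_
  ext x
  simp [orbitFinset, and_comm]

lemma permLength_eq_sum_orbitFinset :
    permLength σ = ∑ ω, (#(orbitFinset σ ω) - 1) := by
  have hcard : Fintype.card X = ∑ ω, #(orbitFinset σ ω) := by
    simpa using card_filter_eq_sum_orbitFinset σ fun _ => True
  have hpos : ∀ ω, 1 ≤ #(orbitFinset σ ω) := fun ω => (orbitFinset_nonempty σ ω).card_pos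
  rw [permLength, permCycles, Nat.card_eq_fintype_card, Nat.card_eq_fintype_card, hcard,
    ← card_univ, card_eq_sum_ones, ← Nat.eq_sub_of_add_eq (sum_add_distrib.symm.trans
      (sum_congr rfl fun ω _ => Nat.sub_add_cancel (hpos ω)))]

lemma sum_orbitFinset_comp_apply {M : Type*} [AddCommMonoid M] (f : X → M)
    (ω : orbitRel.Quotient (Subgroup.zpowers σ) X) :
    ∑ x ∈ orbitFinset σ ω, f (σ x) = ∑ x ∈ orbitFinset σ ω, f x :=
  sum_nbij' σ σ.symm
    (fun x hx => by rwa [mem_orbitFinset, orbitRel_mk_apply, ← mem_orbitFinset])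
    (fun x hx => by rwa [mem_orbitFinset, ← orbitRel_mk_apply σ, apply_symm_apply,
      ← mem_orbitFinset])
    (fun x _ => symm_apply_apply σ x) (fun x _ => apply_symm_apply σ x) fun _ _ => rfl

lemma even_card_filter_orbitFinset (s : X → Bool)
    (ω : orbitRel.Quotient (Subgroup.zpowers σ) X) :
    Even #{x ∈ orbitFinset σ ω | s (σ x) ≠ s x} := by
  have hindicator : ∀ a b : Bool,
      ((if a ≠ b then 1 else 0 : ℕ) : ZMod 2) = (a.toNat : ZMod 2) + b.toNat := by decide
  rw [even_iff_two_dvd, ← ZMod.natCast_eq_zero_iff, card_filter, Nat.cast_sum]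
  calc ∑ x ∈ orbitFinset σ ω, ((if s (σ x) ≠ s x then 1 else 0 : ℕ) : ZMod 2)
      = ∑ x ∈ orbitFinset σ ω, (((s (σ x)).toNat : ZMod 2) + (s x).toNat) :=
        sum_congr rfl fun x _ => hindicator _ _
    _ = 2 * ∑ x ∈ orbitFinset σ ω, ((s x).toNat : ZMod 2) := by
        rw [sum_add_distrib, sum_orbitFinset_comp_apply σ fun x => ((s x).toNat : ZMod 2), two_mul]
    _ = 0 := by rw [show (2 : ZMod 2) = 0 from rfl, zero_mul]

lemma card_filter_apply_ne_le_two_mul_permLength (s : X → Bool) :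
    #{x | s (σ x) ≠ s x} ≤ 2 * permLength σ := by
  rw [card_filter_eq_sum_orbitFinset σ, permLength_eq_sum_orbitFinset, mul_sum]
  refine sum_le_sum fun ω _ => ?_
  -- an even number that is at most `k ≥ 1` is at most `2 * (k - 1)`
  obtain ⟨m, hm⟩ := even_card_filter_orbitFinset σ s ω
  have hle := card_filter_le (orbitFinset σ ω) fun x => s (σ x) ≠ s x
  have hpos := (orbitFinset_nonempty σ ω).card_pos
  omega

variable {σ} in
lemma two_mul_permLength_le_card_support [DecidableEq X] (h : σ * σ = 1) :
    2 * permLength σ ≤ #σ.support := by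
  rw [permLength_eq_sum_orbitFinset, mul_sum, Perm.support, card_filter_eq_sum_orbitFinset σ]
  refine sum_le_sum fun ω _ => ?_
  obtain ⟨x, hx⟩ := orbitFinset_nonempty σ ω
  have hsub : orbitFinset σ ω ⊆ {x, σ x} := fun y hy => by
    rw [mem_orbitFinset] at hx hy
    simpa using eq_or_eq_apply_of_orbitRel_mk_eq h (hy.trans hx.symm)
  have hinv : σ (σ x) = x := by rw [← Perm.mul_apply, h, Perm.one_apply]
  by_cases hfix : σ x = x
  · have : #(orbitFinset σ ω) ≤ 1 := by simpa [hfix] using card_le_card hsub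
    omega
  · have hmoved : {y ∈ orbitFinset σ ω | σ y ≠ y} = orbitFinset σ ω := by
      refine filter_true_of_mem fun y hy => ?_
      rcases mem_insert.1 (hsub hy) with rfl | hy
      · exact hfix
      · rw [mem_singleton.1 hy, hinv]; exact Ne.symm hfix
    have := (card_le_card hsub).trans (card_le_two : #{x, σ x} ≤ 2)
    rw [hmoved]
    omega

end Orbits

section Pairings

variable {α : Type*}

lemma IsPairing.apply_apply {u : Perm α} (hu : IsPairing u) (x : α) : u (u x) = x := by
  rw [← Perm.mul_apply, hu.1, Perm.one_apply]

lemma IsPairing.subtypePerm {u : Perm α} (hu : IsPairing u) {p : α → Prop}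
    (hp : ∀ x, p (u x) ↔ p x) : IsPairing (u.subtypePerm hp) :=
  ⟨by ext ⟨x, _⟩; exact hu.apply_apply x, fun x h => hu.2 x (congrArg Subtype.val h)⟩

variable [Fintype α] [DecidableEq α]

lemma IsPairing.cycleType_eq {u : Perm α} (hu : IsPairing u) :
    u.cycleType = Multiset.replicate (Fintype.card α / 2) 2 := by
  have hrep := Perm.cycleType_of_pow_prime_eq_one (p := 2) (by rw [pow_two, hu.1])
  have hsum := u.sum_cycleType
  rw [hrep, Multiset.sum_replicate, smul_eq_mul,
    eq_univ_of_forall fun x => Perm.mem_support.2 (hu.2 x), card_univ] at hsum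
  rw [hrep, ← hsum, Nat.mul_div_cancel _ two_pos]

lemma IsPairing.isConj {u v : Perm α} (hu : IsPairing u) (hv : IsPairing v) : IsConj u v :=
  Perm.isConj_iff_cycleType_eq.2 (hu.cycleType_eq.trans hv.cycleType_eq.symm)

lemma IsPairing.exists_equiv_conj {β : Type*} [Fintype β] [DecidableEq β] {u : Perm α}
    {v : Perm β} (hu : IsPairing u) (hv : IsPairing v) (hcard : Fintype.card α = Fintype.card β) :
    ∃ φ : α ≃ β, ∀ a, φ (u a) = v (φ a) := by
  let e := Fintype.equivOfCardEq hcard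
  have hv' : IsPairing (e.symm.permCongr v) :=
    ⟨by ext a; simp [hv.apply_apply],
      fun a h => hv.2 (e a) (by simpa [Equiv.symm_apply_eq] using h)⟩
  obtain ⟨g, hg⟩ := isConj_iff.1 (hu.isConj hv')
  refine ⟨g.trans e, fun a => ?_⟩
  have := congrArg (· (g a)) hg
  simp only [Perm.mul_apply, Perm.inv_def, symm_apply_apply, permCongr_apply, symm_symm] at this
  rw [trans_apply, trans_apply, this, apply_symm_apply]

end Pairings

section Flip

variable {X : Type*} (s : X → Bool) {β : Perm X}

lemma sameSide_apply_iff (hβ : IsPairing β) (b : Bool) (x : X) :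
    (s (β x) = b ∧ s (β (β x)) = b) ↔ (s x = b ∧ s (β x) = b) := by
  rw [hβ.apply_apply, and_comm]

lemma sameSide_false_or_sameSide_true_or_ne (x : X) :
    (s x = false ∧ s (β x) = false) ∨ (s x = true ∧ s (β x) = true) ∨ s (β x) ≠ s x := by
  cases s x <;> cases s (β x) <;> simp

variable {s}
variable (φ : {x // s x = false ∧ s (β x) = false} ≃ {x // s x = true ∧ s (β x) = true})

def flipPairing (x : X) : X :=
  if h : s x = false ∧ s (β x) = false then φ ⟨x, h⟩
  else if h' : s x = true ∧ s (β x) = true then φ.symm ⟨x, h'⟩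
  else β x

lemma flipPairing_of_false {x : X} (h : s x = false ∧ s (β x) = false) :
    flipPairing φ x = φ ⟨x, h⟩ :=
  dif_pos h

lemma flipPairing_of_true {x : X} (h : s x = true ∧ s (β x) = true) :
    flipPairing φ x = φ.symm ⟨x, h⟩ := by
  rw [flipPairing, dif_neg (by simp [h.1]), dif_pos h]

lemma flipPairing_of_ne {x : X} (h : s (β x) ≠ s x) : flipPairing φ x = β x := by
  rw [flipPairing, dif_neg fun h' => h (h'.2.trans h'.1.symm),
    dif_neg fun h' => h (h'.2.trans h'.1.symm)]

lemma apply_flipPairing (x : X) : s (flipPairing φ x) = !s x := by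
  rcases sameSide_false_or_sameSide_true_or_ne s x with h | h | h
  · rw [flipPairing_of_false φ h, (φ _).2.1, h.1, Bool.not_false]
  · rw [flipPairing_of_true φ h, (φ.symm _).2.1, h.1, Bool.not_true]
  · rw [flipPairing_of_ne φ h]
    revert h; cases s x <;> cases s (β x) <;> simp

lemma flipPairing_involutive (hβ : IsPairing β) : Function.Involutive (flipPairing φ) := by
  intro x
  rcases sameSide_false_or_sameSide_true_or_ne s x with h | h | h
  · rw [flipPairing_of_false φ h, flipPairing_of_true φ (φ ⟨x, h⟩).2, Subtype.coe_eta,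
      symm_apply_apply]
  · rw [flipPairing_of_true φ h, flipPairing_of_false φ (φ.symm ⟨x, h⟩).2, Subtype.coe_eta,
      apply_symm_apply]
  · rw [flipPairing_of_ne φ h, flipPairing_of_ne φ (by rwa [hβ.apply_apply, ne_comm]),
      hβ.apply_apply]

lemma flipPairing_apply_comm (hβ : IsPairing β)
    (hφ : ∀ x, φ (β.subtypePerm (sameSide_apply_iff s hβ false) x) =
      β.subtypePerm (sameSide_apply_iff s hβ true) (φ x)) (x : X) :
    flipPairing φ (β x) = β (flipPairing φ x) := by
  rcases sameSide_false_or_sameSide_true_or_ne s x with h | h | h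
  · rw [flipPairing_of_false φ ((sameSide_apply_iff s hβ false x).2 h),
      flipPairing_of_false φ h]
    exact congrArg Subtype.val (hφ ⟨x, h⟩)
  · rw [flipPairing_of_true φ ((sameSide_apply_iff s hβ true x).2 h), flipPairing_of_true φ h]
    exact congrArg Subtype.val
      (φ.eq_symm_apply.2 (by rw [hφ (φ.symm ⟨x, h⟩), apply_symm_apply])).symm
  · rw [flipPairing_of_ne φ (by rwa [hβ.apply_apply, ne_comm]), flipPairing_of_ne φ h,
      hβ.apply_apply]

end Flip

section Bounds

variable {X : Type*} [Fintype X] (s : X → Bool)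

lemma card_sameSide_le_two_mul_permLength (β τ : Perm X) (hτ : ∀ x, s (τ x) = !s x) :
    #{x | s (β x) = s x} ≤ 2 * permLength (τ * β) := by
  convert card_filter_apply_ne_le_two_mul_permLength (τ * β) s using 3 with x
  rw [Perm.mul_apply, hτ]
  cases s x <;> cases s (β x) <;> decide

lemma IsPairing.exists_flip_two_mul_permLength_le [DecidableEq X] {β : Perm X} (hβ : IsPairing β)
    (hcard : Fintype.card {x // s x = false ∧ s (β x) = false} =
      Fintype.card {x // s x = true ∧ s (β x) = true}) :
    ∃ τ : Perm X, IsPairing τ ∧ (∀ x, s (τ x) = !s x) ∧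
      2 * permLength (τ * β) ≤ #{x | s (β x) = s x} := by
  obtain ⟨φ, hφ⟩ := (hβ.subtypePerm (sameSide_apply_iff s hβ false)).exists_equiv_conj
    (hβ.subtypePerm (sameSide_apply_iff s hβ true)) hcard
  let τ : Perm X := (flipPairing_involutive φ hβ).toPerm
  have hτ : IsPairing τ :=
    ⟨Perm.ext (flipPairing_involutive φ hβ), fun x h => by
      simpa [show flipPairing φ x = x from h] using apply_flipPairing φ x⟩
  have hcomm : τ * β = β * τ := Perm.ext (flipPairing_apply_comm φ hβ hφ)
  have hinv : τ * β * (τ * β) = 1 := by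
    rw [mul_assoc, ← mul_assoc β, ← hcomm, mul_assoc, ← mul_assoc, hτ.1, hβ.1, one_mul]
  have hfix : ∀ x, s (β x) ≠ s x → (τ * β) x = x := fun x h =>
    (flipPairing_of_ne φ (by rwa [hβ.apply_apply, ne_comm])).trans (hβ.apply_apply x)
  refine ⟨τ, hτ, apply_flipPairing φ, (two_mul_permLength_le_card_support hinv).trans
    (card_le_card fun x hx => mem_filter.2 ⟨mem_univ x, ?_⟩)⟩
  exact not_not.1 fun h => Perm.mem_support.1 hx (hfix x h)

end Bounds

section SumSides

lemma card_filter_sum {α β : Type*} [Fintype α] [Fintype β] (p : α ⊕ β → Prop)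
    [DecidablePred p] : #{x | p x} = #{a | p (Sum.inl a)} + #{b | p (Sum.inr b)} := by
  rw [← card_toLeft_add_card_toRight]
  congr 2 <;> ext <;> simp

variable {q : ℕ}

lemma card_inl_isLeft_eq_bR (π : Perm (Fin q ⊕ Fin q)) :
    #{i | (π (Sum.inl i)).isLeft} = bR π := by
  rw [bR]
  have hperm : #{x | (π x).isRight} = #{x : Fin q ⊕ Fin q | x.isRight} :=
    card_equiv π fun x => by simp
  have hL := card_filter_add_card_filter_not (s := univ) fun i : Fin q => (π (Sum.inl i)).isLeft
  rw [card_filter_sum, card_filter_sum] at hperm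
  simp only [Sum.isRight_inl, Bool.false_eq_true, filter_false, card_empty, Sum.isRight_inr,
    filter_true, card_univ, Fintype.card_fin, zero_add, Bool.not_eq_true, Sum.isLeft_eq_false]
    at hperm hL
  omega

lemma IsTransverse.isRight_apply {τ : Perm (Fin q ⊕ Fin q)} (hτ : IsTransverse τ)
    (x : Fin q ⊕ Fin q) : (τ x).isRight = !x.isRight := by
  rcases x with i | j
  · exact hτ i
  · have hL : #{i | (τ (Sum.inl i)).isLeft} = 0 := by simp [hτ _]
    rw [card_inl_isLeft_eq_bR, bR, card_eq_zero, filter_eq_empty_iff] at hL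
    simpa using hL (mem_univ j)

lemma card_isRight_apply_eq_isRight (β : Perm (Fin q ⊕ Fin q)) :
    #{x | (β x).isRight = x.isRight} = 2 * bR β := by
  rw [card_filter_sum, two_mul]
  congr 1
  rw [← card_inl_isLeft_eq_bR]
  congr 1
  ext
  simp

lemma card_sameSide_false_eq_card_sameSide_true (β : Perm (Fin q ⊕ Fin q)) :
    Fintype.card {x // x.isRight = false ∧ (β x).isRight = false} =
      Fintype.card {x // x.isRight = true ∧ (β x).isRight = true} := by
  rw [Fintype.card_subtype, Fintype.card_subtype, card_filter_sum, card_filter_sum]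
  simpa [bR] using card_inl_isLeft_eq_bR β

end SumSides

theorem stmt6_general (q : ℕ) (β : Equiv.Perm (Fin q ⊕ Fin q)) (hβ : IsPairing β) :
    IsLeast {n : ℕ | ∃ τ : Equiv.Perm (Fin q ⊕ Fin q),
      IsPairing τ ∧ IsTransverse τ ∧ n = permLength (τ * β)} (bR β) := by
  have hsame := card_isRight_apply_eq_isRight β
  obtain ⟨τ, hτ, hflip, hle⟩ :=
    hβ.exists_flip_two_mul_permLength_le Sum.isRight (card_sameSide_false_eq_card_sameSide_true β)
  refine ⟨⟨τ, hτ, fun i => hflip (Sum.inl i), ?_⟩, ?_⟩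
  · have := card_sameSide_le_two_mul_permLength Sum.isRight β τ hflip
    omega
  · rintro n ⟨τ', -, hτ', rfl⟩
    have := card_sameSide_le_two_mul_permLength Sum.isRight β τ' hτ'.isRight_apply
    omega

theorem stmt6 (q : ℕ) (hq : 1 ≤ q) (β : Equiv.Perm (Fin q ⊕ Fin q)) (hβ : IsPairing β) :
    IsLeast {n : ℕ | ∃ τ : Equiv.Perm (Fin q ⊕ Fin q),
      IsPairing τ ∧ IsTransverse τ ∧ n = permLength (τ * β)} (bR β) :=
  stmt6_general q β hβ
end

section
/- Let α̂ be any fixed-point-free involution of Y = Fin m × Fin 2 × Bool lying on a geodesic between δ̂ and β̂, i.e. satisfying |δ̂∘α̂| + |α̂∘β̂| = |δ̂∘β̂|. Then there exists a subset Λ ⊆ Fin m such that for every (i, ε, s) ∈ Y: α̂ (i, ε, s) = β̂ (i, ε, s) if i ∈ Λ, and α̂ (i, ε, s) = δ̂ (i, ε, s) if i ∉ Λ. -/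
/-- The pairing `δ̂ (i, ε, s) = (i, ε, ¬s)` swapping the two sides within each block. -/
def deltaHat (m : ℕ) : Equiv.Perm (Fin m × Fin 2 × Bool) :=
  Function.Involutive.toPerm (fun y => (y.1, y.2.1, !y.2.2)) (fun y => by simp)

/-- The pairing `β̂ (i, ε, s) = (i, 1 - ε, s)` swapping the two elements of `Fin 2`
on each side of each block. -/
def betaHat (m : ℕ) : Equiv.Perm (Fin m × Fin 2 × Bool) :=
  Function.Involutive.toPerm (fun y => (y.1, 1 - y.2.1, y.2.2))
    (fun y => by
      obtain ⟨i, ε, s⟩ := y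
      have h : ∀ e : Fin 2, 1 - (1 - e) = e := by decide
      simp [h])

/-!
Counting orbits of `⟨σ⟩` gives `2 #σ ≤ |X| + |Fix σ|`, and `|X| ≤ 2 #σ` when `σ` is an
involution. As `δ̂β̂` is an involution, the geodesic identity forces
`|Fix (δ̂α̂)| + |Fix (α̂β̂)| ≥ |Y|`. These fixed-point sets are `{α̂ = δ̂}` and `{α̂ = β̂}`,
disjoint because `δ̂ ≠ β̂` pointwise, so they cover `Y`. Since all three maps are involutions,
agreement of `α̂` with `δ̂` (or with `β̂`) at a point propagates along `δ̂` and `β̂`, hence to its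
whole block.
-/

open Equiv MulAction Subgroup Finset Function

section PermCycles

variable {X : Type*}

lemma mk_apply_eq_mk (σ : Perm X) (x : X) :
    (Quotient.mk'' (σ x) : orbitRel.Quotient (zpowers σ) X) = Quotient.mk'' x :=
  Quotient.sound' ⟨⟨σ, mem_zpowers σ⟩, rfl⟩

lemma eq_or_eq_apply_of_mem_orbit {σ : Perm X} (hσ : Involutive σ) {x y : X}
    (h : y ∈ orbit (zpowers σ) x) : y = x ∨ y = σ x := by
  obtain ⟨⟨g, hg⟩, rfl⟩ := h
  obtain ⟨k, rfl⟩ := mem_zpowers_iff.mp hg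
  have hsq : σ ^ (2 : ℤ) = 1 := by rw [zpow_two]; exact Equiv.ext hσ
  obtain ⟨j, rfl | rfl⟩ := Int.even_or_odd' k
  · left; simp [zpow_mul, hsq]
  · right; simp [zpow_add, zpow_mul, hsq]

lemma card_le_two_mul_permCycles [Finite X] {σ : Perm X} (hσ : Involutive σ) :
    Nat.card X ≤ 2 * permCycles σ := by
  have hsurj : Surjective fun p : orbitRel.Quotient (zpowers σ) X × Bool =>
      cond p.2 (σ p.1.out) p.1.out := by
    intro x
    have hx : x ∈ orbit (zpowers σ) (Quotient.mk'' x : orbitRel.Quotient (zpowers σ) X).out :=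
      mem_orbit_symm.mp (Quotient.mk_out' (s₁ := orbitRel (zpowers σ) X) x)
    rcases eq_or_eq_apply_of_mem_orbit hσ hx with h | h
    · exact ⟨(_, false), h.symm⟩
    · exact ⟨(_, true), h.symm⟩
  simpa [permCycles, mul_comm] using Nat.card_le_card_of_surjective _ hsurj

variable [Fintype X] [DecidableEq X]

lemma two_mul_permCycles_le (σ : Perm X) :
    2 * permCycles σ ≤ Fintype.card X + #{x | σ x = x} := by
  classical
  let f : X ⊕ {x // σ x = x} → orbitRel.Quotient (zpowers σ) X :=
    Sum.elim Quotient.mk'' (fun x => Quotient.mk'' x.1)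
  -- a fixed point of an orbit is seen twice, otherwise the orbit contains `x ≠ σ x`
  have hfib : ∀ c ∈ (univ : Finset _), 2 ≤ #{a | f a = c} := by
    intro c _
    by_cases hc : σ c.out = c.out
    · calc 2 = #{Sum.inl c.out, Sum.inr ⟨c.out, hc⟩} := (card_pair (by simp)).symm
        _ ≤ _ := card_le_card (by simp [insert_subset_iff, f])
    · calc 2 = #{Sum.inl c.out, Sum.inl (σ c.out)} :=
          (card_pair (by simpa [eq_comm] using hc)).symm
        _ ≤ _ := card_le_card (by simp [insert_subset_iff, f, mk_apply_eq_mk])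
  have := mul_card_image_le_card_of_maps_to (fun a _ => mem_univ (f a)) 2 hfib
  rw [card_univ, card_univ, Fintype.card_sum, Fintype.card_subtype] at this
  rwa [permCycles, Nat.card_eq_fintype_card]

lemma permLength_add_permCycles (σ : Perm X) : permLength σ + permCycles σ = Fintype.card X := by
  have := two_mul_permCycles_le σ
  have := card_le_univ (s := ({x | σ x = x} : Finset X))
  rw [permLength, Nat.card_eq_fintype_card]
  omega

theorem apply_eq_or_apply_eq_of_permLength_add_eq {a b α : Perm X} (ha : Involutive a)
    (hα : Involutive α) (hab : Involutive (a * b)) (hne : ∀ x, a x ≠ b x)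
    (h : permLength (a * α) + permLength (α * b) = permLength (a * b)) (x : X) :
    α x = a x ∨ α x = b x := by
  set A : Finset X := {y | α y = a y}
  set B : Finset X := {y | α y = b y}
  have hfixA : #{y | (a * α) y = y} = #A :=
    congrArg card (filter_congr fun y _ => by rw [Perm.mul_apply, ha.eq_iff])
  have hfixB : #{y | (α * b) y = y} = #B :=
    congrArg card (filter_congr fun y _ => by rw [Perm.mul_apply, hα.eq_iff, eq_comm])
  have hdisj : Disjoint A B := disjoint_filter.mpr fun y _ hya hyb => hne y (hya.symm.trans hyb)
  have hcover : A ∪ B = univ := by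
    apply eq_univ_of_card
    have := card_le_two_mul_permCycles hab
    have := two_mul_permCycles_le (a * α)
    have := two_mul_permCycles_le (α * b)
    have := permLength_add_permCycles (a * α)
    have := permLength_add_permCycles (α * b)
    have := permLength_add_permCycles (a * b)
    have := card_le_univ (A ∪ B)
    rw [card_union_of_disjoint hdisj] at this ⊢
    rw [Nat.card_eq_fintype_card] at *
    omega
  have hx : x ∈ A ∪ B := hcover ▸ mem_univ x
  simpa [A, B] using hx

end PermCycles

lemma apply_eq_on_images_of_apply_eq {X : Type*} {a b α : X → X} (ha : Involutive a)
    (hb : Involutive b) (hα : Involutive α) (hne : ∀ x, a x ≠ b x)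
    (h : ∀ x, α x = a x ∨ α x = b x) (x : X) (hx : α x = a x) :
    α (a x) = a (a x) ∧ α (b x) = a (b x) := by
  refine ⟨by rw [← hx, hα, hx, ha], (h (b x)).resolve_right fun hbx => hne x ?_⟩
  rw [← hx, ← hα (b x), hbx, hb]

section Blocks

variable {m : ℕ}

@[simp] lemma deltaHat_apply (i : Fin m) (ε : Fin 2) (s : Bool) :
    deltaHat m (i, ε, s) = (i, ε, !s) := rfl

@[simp] lemma betaHat_apply (i : Fin m) (ε : Fin 2) (s : Bool) :
    betaHat m (i, ε, s) = (i, 1 - ε, s) := rfl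

lemma deltaHat_involutive : Involutive (deltaHat m) := Involutive.toPerm_involutive _

lemma betaHat_involutive : Involutive (betaHat m) := Involutive.toPerm_involutive _

lemma deltaHat_mul_betaHat_involutive : Involutive (deltaHat m * betaHat m) := by
  rintro ⟨i, ε, s⟩
  fin_cases ε <;> simp

lemma deltaHat_apply_ne_betaHat_apply (y : Fin m × Fin 2 × Bool) :
    deltaHat m y ≠ betaHat m y := by
  obtain ⟨i, ε, s⟩ := y
  simp

lemma forall_mem_block_of_closed {P : Fin m × Fin 2 × Bool → Prop}
    (hδ : ∀ y, P y → P (deltaHat m y)) (hβ : ∀ y, P y → P (betaHat m y)) {i : Fin m}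
    (h : P (i, 0, false)) (ε : Fin 2) (s : Bool) : P (i, ε, s) := by
  fin_cases ε <;> cases s
  exacts [h, hδ _ h, hβ _ h, hδ _ (hβ _ h)]

end Blocks

theorem stmt9_general (m : ℕ) (αh : Equiv.Perm (Fin m × Fin 2 × Bool))
    (hα : IsPairing αh)
    (hgeo : permLength (deltaHat m * αh) + permLength (αh * betaHat m)
      = permLength (deltaHat m * betaHat m)) :
    ∃ Λ : Finset (Fin m), ∀ (i : Fin m) (ε : Fin 2) (s : Bool),
      (i ∈ Λ → αh (i, ε, s) = betaHat m (i, ε, s)) ∧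
      (i ∉ Λ → αh (i, ε, s) = deltaHat m (i, ε, s)) := by
  have hαinv : Involutive αh := DFunLike.congr_fun hα.1
  have hne := deltaHat_apply_ne_betaHat_apply (m := m)
  have hdich := apply_eq_or_apply_eq_of_permLength_add_eq deltaHat_involutive hαinv
    deltaHat_mul_betaHat_involutive hne hgeo
  have hβ := apply_eq_on_images_of_apply_eq betaHat_involutive deltaHat_involutive hαinv
    (fun y => (hne y).symm) (fun y => (hdich y).symm)
  have hδ := apply_eq_on_images_of_apply_eq deltaHat_involutive betaHat_involutive hαinv
    hne hdich
  refine ⟨({i | αh (i, 0, false) = betaHat m (i, 0, false)} : Finset (Fin m)),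
    fun i ε s => ⟨fun hi => ?_, fun hi => ?_⟩⟩
  · exact forall_mem_block_of_closed (fun y hy => (hβ y hy).2) (fun y hy => (hβ y hy).1)
      (by simpa using hi) ε s
  · exact forall_mem_block_of_closed (fun y hy => (hδ y hy).1) (fun y hy => (hδ y hy).2)
      ((hdich _).resolve_right (by simpa using hi)) ε s

theorem stmt9 (m : ℕ) (hm : 1 ≤ m) (αh : Equiv.Perm (Fin m × Fin 2 × Bool))
    (hα : IsPairing αh)
    (hgeo : permLength (deltaHat m * αh) + permLength (αh * betaHat m)
      = permLength (deltaHat m * betaHat m)) :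
    ∃ Λ : Finset (Fin m), ∀ (i : Fin m) (ε : Fin 2) (s : Bool),
      (i ∈ Λ → αh (i, ε, s) = betaHat m (i, ε, s)) ∧
      (i ∉ Λ → αh (i, ε, s) = deltaHat m (i, ε, s)) :=
  stmt9_general m αh hα hgeo
end

section
/- Fix integers p, r, d ≥ 1, let β be a fixed-point-free involution of Legs = Fin p × Fin r × Bool, and let B_R(β) := card {z ∈ Legs | z has Bool coordinate true and β z has Bool coordinate true} (this equals 2♭(β), twice the number of bumps of β). Then for every positive semidefinite ρ ∈ M_{d^r}(ℂ) with Tr ρ = 1, one has |f_β(ρ)|² ≤ d^{B_R(β)}. -/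
open ComplexOrder

/-- The value assigned to a leg `(i, x, s)`: `a i x` on a left leg (`s = false`),
`b i x` on a right leg (`s = true`). -/
def legVal {p r d : ℕ} (a b : Fin p → Fin r → Fin d) :
    Fin p × Fin r × Bool → Fin d :=
  fun z => if z.2.2 then b z.1 z.2.1 else a z.1 z.2.1

/-- The contraction `f_β(ρ) = Tr[ρ^{⊗p} M(β)]`: the sum over all index assignments
compatible with the pairing `β` of the corresponding products of entries of `ρ`. -/
noncomputable def fBeta {p r d : ℕ} (β : Equiv.Perm (Fin p × Fin r × Bool))
    (ρ : Matrix (Fin r → Fin d) (Fin r → Fin d) ℂ) : ℂ :=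
  ∑ a : Fin p → Fin r → Fin d, ∑ b : Fin p → Fin r → Fin d,
    (∏ i : Fin p, ρ (a i) (b i)) *
      (if ∀ z : Fin p × Fin r × Bool, legVal a b z = legVal a b (β z) then 1 else 0)

/-- `B_R(β) = 2♭(β)`: the number of right legs paired by `β` to right legs. -/
def bigBR {p r : ℕ} (β : Equiv.Perm (Fin p × Fin r × Bool)) : ℕ :=
  (Finset.univ.filter fun z : Fin p × Fin r × Bool =>
    z.2.2 = true ∧ (β z).2.2 = true).card

/-! Write `ρ = Aᴴ A`. Then `ρ^{⊗p} = (A^{⊗p})ᴴ A^{⊗p}` is again positive semidefinite with trace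
one, and `f_β(ρ)` is the sum of the entries `ρ^{⊗p} a b` over the pairs `(a, b)` compatible with
`β`. By the Schur test this sum has modulus at most `√(N_R N_L)`, where every `a` has at most `N_R`
compatible `b` and every `b` at most `N_L` compatible `a`. A compatible `b` is determined by `a`
and by its values on one leg of each right–right pair of `β`, so `N_R ≤ d ^ (B_R / 2)`; likewise
`N_L ≤ d ^ (B_L / 2)`, with `B_L` the number of left legs paired to left legs, and `B_L = B_R`
because `β` sends as many left legs to the right as right legs to the left. -/

open Finset

namespace Matrix

def tensorPow {m n R : Type*} [CommMonoid R] (M : Matrix m n R) (ι : Type*) [Fintype ι] :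
    Matrix (ι → m) (ι → n) R :=
  of fun a b => ∏ i, M (a i) (b i)

variable {ι m n R : Type*} [Fintype ι]

@[simp]
theorem tensorPow_apply [CommMonoid R] (M : Matrix m n R) (a : ι → m) (b : ι → n) :
    M.tensorPow ι a b = ∏ i, M (a i) (b i) := rfl

theorem conjTranspose_tensorPow [CommMonoid R] [StarMul R] (M : Matrix m n R) :
    (M.tensorPow ι)ᴴ = Mᴴ.tensorPow ι := by
  ext a b
  simp [star_prod]

theorem tensorPow_mul [DecidableEq ι] [CommSemiring R] [Fintype m] {l : Type*} (M : Matrix l m R)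
    (N : Matrix m n R) : (M * N).tensorPow ι = M.tensorPow ι * N.tensorPow ι := by
  ext a c
  simp only [tensorPow_apply, mul_apply, Fintype.prod_sum, prod_mul_distrib]

theorem trace_tensorPow [DecidableEq ι] [CommSemiring R] [Fintype n] (M : Matrix n n R) :
    (M.tensorPow ι).trace = M.trace ^ Fintype.card ι := by
  rw [← Finset.card_univ, ← prod_const]
  simp only [trace, diag_apply, tensorPow_apply, Fintype.prod_sum]

open scoped MatrixOrder in
theorem PosSemidef.tensorPow [DecidableEq ι] [Fintype n] {M : Matrix n n ℂ} (hM : M.PosSemidef) :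
    (M.tensorPow ι).PosSemidef := by
  classical
  obtain ⟨A, rfl⟩ := CStarAlgebra.nonneg_iff_eq_star_mul_self.mp hM.nonneg
  rw [star_eq_conjTranspose, tensorPow_mul, ← conjTranspose_tensorPow]
  exact posSemidef_conjTranspose_mul_self _

end Matrix

section SchurTest

variable {ι : Type*} [Fintype ι] (C : ι → ι → Prop) [DecidableRel C]

theorem sum_sum_ite_le_mul_sum {N : ℕ} (hC : ∀ a, #{b | C a b} ≤ N) {q : ι → ℝ}
    (hq : ∀ a, 0 ≤ q a) : ∑ a, ∑ b, (if C a b then q a else 0) ≤ N * ∑ a, q a := by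
  rw [mul_sum]
  gcongr with a
  rw [← sum_filter, sum_const, nsmul_eq_mul]
  exact mul_le_mul_of_nonneg_right (by exact_mod_cast hC a) (hq a)

open scoped MatrixOrder in
theorem Matrix.PosSemidef.norm_sum_ite_sq_le {M : Matrix ι ι ℂ} (hM : M.PosSemidef) {NR NL : ℕ}
    (hR : ∀ a, #{b | C a b} ≤ NR) (hL : ∀ b, #{a | C a b} ≤ NL) :
    ‖∑ a, ∑ b, if C a b then M a b else 0‖ ^ 2 ≤ NR * NL * ‖M.trace‖ ^ 2 := by
  classical
  obtain ⟨U, rfl⟩ := CStarAlgebra.nonneg_iff_eq_star_mul_self.mp hM.nonneg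
  set x : ι → ι → ℝ := fun k a => ‖U k a‖
  set T := ∑ k, ∑ a, x k a ^ 2
  have htrace : ‖(star U * U).trace‖ = T := by
    have : (star U * U).trace = (T : ℂ) := by
      simp only [Matrix.trace, Matrix.diag_apply, Matrix.mul_apply, Matrix.star_apply,
        Complex.star_def, Complex.conj_mul', T, x]
      push_cast
      exact sum_comm
    rw [this, Complex.norm_of_nonneg (by positivity)]
  have hnorm : ‖∑ a, ∑ b, if C a b then (star U * U) a b else 0‖
      ≤ ∑ k, ∑ a, ∑ b, if C a b then x k a * x k b else 0 := by
    calc _ ≤ ∑ a, ∑ b, ‖if C a b then (star U * U) a b else 0‖ :=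
          (norm_sum_le _ _).trans (sum_le_sum fun a _ => norm_sum_le _ _)
      _ ≤ ∑ a, ∑ b, ∑ k, if C a b then x k a * x k b else 0 := by
          gcongr with a _ b
          split_ifs
          · simp only [Matrix.mul_apply, Matrix.star_apply, x]
            refine (norm_sum_le _ _).trans_eq (sum_congr rfl fun k _ => ?_)
            rw [norm_mul, norm_star]
          · simp
      _ = _ := (sum_congr rfl fun a _ => sum_comm).trans sum_comm
  have hCS : (∑ k, ∑ a, ∑ b, if C a b then x k a * x k b else 0) ^ 2
      ≤ (∑ k, ∑ a, ∑ b, if C a b then x k a ^ 2 else 0)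
        * ∑ k, ∑ a, ∑ b, if C a b then x k b ^ 2 else 0 := by
    simp only [← Fintype.sum_prod_type']
    refine sum_sq_le_sum_mul_sum_of_sq_le_mul _ (fun _ _ => ?_) (fun _ _ => ?_) (fun e _ => ?_) <;>
      split_ifs <;> first | positivity | simp [mul_pow]
  have hrow : ∑ k, ∑ a, ∑ b, (if C a b then x k a ^ 2 else 0) ≤ NR * T := by
    rw [mul_sum]
    exact sum_le_sum fun k _ => sum_sum_ite_le_mul_sum C hR fun a => by positivity
  have hcol : ∑ k, ∑ a, ∑ b, (if C a b then x k b ^ 2 else 0) ≤ NL * T := by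
    rw [mul_sum]
    refine sum_le_sum fun k _ => ?_
    rw [sum_comm]
    exact sum_sum_ite_le_mul_sum (fun b a => C a b) hL fun b => by positivity
  rw [htrace]
  calc _ ≤ (∑ k, ∑ a, ∑ b, if C a b then x k a * x k b else 0) ^ 2 := by gcongr
    _ ≤ (NR * T) * (NL * T) := hCS.trans (by gcongr)
    _ = NR * NL * T ^ 2 := by ring

end SchurTest

namespace IsPairing

variable {X : Type*} {β : Equiv.Perm X}

theorem apply_apply_s18 (hβ : IsPairing β) (z : X) : β (β z) = z :=
  congrArg (fun σ : Equiv.Perm X => σ z) hβ.1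

theorem exists_half (hβ : IsPairing β) (S : Finset X) (hS : ∀ z ∈ S, β z ∈ S) :
    ∃ H : Finset X, 2 * #H = #S ∧ ∀ z ∈ S, z ∈ H ∨ β z ∈ H := by
  let _ : LinearOrder X := WellOrderingRel.isWellOrder.linearOrder
  have hmem : ∀ z, β z ∈ S ↔ z ∈ S := fun z =>
    ⟨fun h => hβ.apply_apply_s18 z ▸ hS _ h, hS z⟩
  refine ⟨S.filter fun z => z < β z, ?_, fun z hz => ?_⟩
  · have hswap : #(S.filter fun z => ¬ z < β z) = #(S.filter fun z => z < β z) := by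
      refine card_equiv β fun z => ?_
      simp only [mem_filter, hmem, hβ.apply_apply_s18, not_lt, and_congr_right_iff]
      exact fun _ => le_iff_lt_or_eq.trans (or_iff_left (hβ.2 z))
    rw [← card_filter_add_card_filter_not (s := S) (fun z => z < β z), hswap, two_mul]
  · rcases lt_or_gt_of_ne (hβ.2 z).symm with h | h
    · exact Or.inl (mem_filter.2 ⟨hz, h⟩)
    · exact Or.inr (mem_filter.2 ⟨hS z hz, by rwa [hβ.apply_apply_s18]⟩)

end IsPairing

theorem Equiv.Perm.card_filter_false_false_eq {X : Type*} [Fintype X] (β : Equiv.Perm X)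
    (s : X → Bool) (hs : #{z | s z = false} = #{z | s z = true}) :
    #{z | s z = false ∧ s (β z) = false} = #{z | s z = true ∧ s (β z) = true} := by
  have hfalse := card_filter_add_card_filter_not (s := {z | s z = false}) (fun z => s (β z) = false)
  have htrue := card_filter_add_card_filter_not (s := {z | s (β z) = true}) (fun z => s z = true)
  have hcomp : #{z | s (β z) = true} = #{z | s z = true} :=
    card_equiv β (by simp)
  simp only [filter_filter, Bool.not_eq_false, Bool.not_eq_true] at hfalse htrue
  simp only [and_comm] at hfalse htrue ⊢
  omega

theorem Function.eq_of_eqOn_of_forall_mem_or {X Y : Type*} {β : X → X} {v w : X → Y}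
    (hv : ∀ z, v z = v (β z)) (hw : ∀ z, w z = w (β z)) {T : Set X}
    (hT : ∀ z, z ∈ T ∨ β z ∈ T) (h : Set.EqOn v w T) : v = w := by
  funext z
  rcases hT z with hz | hz
  · exact h hz
  · rw [hv, hw, h hz]

section Legs

variable {p r d : ℕ}

theorem card_legs_false_eq_true :
    #{z : Fin p × Fin r × Bool | z.2.2 = false} = #{z : Fin p × Fin r × Bool | z.2.2 = true} :=
  card_equiv ((Equiv.refl _).prodCongr ((Equiv.refl _).prodCongr Equiv.boolNot)) (by simp)

theorem card_left_left_eq_bigBR (β : Equiv.Perm (Fin p × Fin r × Bool)) :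
    #{z | z.2.2 = false ∧ (β z).2.2 = false} = bigBR β :=
  β.card_filter_false_false_eq (fun z => z.2.2) card_legs_false_eq_true

variable {β : Equiv.Perm (Fin p × Fin r × Bool)} {H : Finset (Fin p × Fin r × Bool)}

theorem eq_of_eqOn_of_covers {Y : Type*} (s : Bool)
    (hH : ∀ z, z.2.2 = s → (β z).2.2 = s → z ∈ H ∨ β z ∈ H)
    {v w : Fin p × Fin r × Bool → Y} (hv : ∀ z, v z = v (β z)) (hw : ∀ z, w z = w (β z))
    (hside : ∀ z, z.2.2 ≠ s → v z = w z) (hHeq : ∀ z ∈ H, v z = w z) : v = w := by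
  refine Function.eq_of_eqOn_of_forall_mem_or hv hw (T := {z | z.2.2 ≠ s ∨ z ∈ H})
    (fun z => ?_) fun z hz => hz.elim (hside z) (hHeq z)
  by_cases hz : z.2.2 = s
  · by_cases hβz : (β z).2.2 = s
    · exact (hH z hz hβz).imp Or.inr Or.inr
    · exact Or.inr (Or.inl hβz)
  · exact Or.inl (Or.inl hz)

theorem card_compatible_right_le (hH : ∀ z, z.2.2 = true → (β z).2.2 = true → z ∈ H ∨ β z ∈ H)
    (a : Fin p → Fin r → Fin d) :
    #{b | ∀ z, legVal a b z = legVal a b (β z)} ≤ d ^ #H := by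
  calc _ ≤ #(univ : Finset (H → Fin d)) :=
        card_le_card_of_injOn (fun b h => legVal a b h) (by simp) fun b₁ hb₁ b₂ hb₂ heq => ?_
    _ = d ^ #H := by simp
  simp only [coe_filter, mem_univ, true_and] at hb₁ hb₂
  have hagree : legVal a b₁ = legVal a b₂ :=
    eq_of_eqOn_of_covers true hH hb₁ hb₂
      (fun z hz => by simp [legVal, Bool.eq_false_iff.2 hz])
      fun z hz => congrFun heq ⟨z, hz⟩
  funext i x
  simpa [legVal] using congrFun hagree (i, x, true)

theorem card_compatible_left_le (hH : ∀ z, z.2.2 = false → (β z).2.2 = false → z ∈ H ∨ β z ∈ H)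
    (b : Fin p → Fin r → Fin d) :
    #{a | ∀ z, legVal a b z = legVal a b (β z)} ≤ d ^ #H := by
  calc _ ≤ #(univ : Finset (H → Fin d)) :=
        card_le_card_of_injOn (fun a h => legVal a b h) (by simp) fun a₁ ha₁ a₂ ha₂ heq => ?_
    _ = d ^ #H := by simp
  simp only [coe_filter, mem_univ, true_and] at ha₁ ha₂
  have hagree : legVal a₁ b = legVal a₂ b :=
    eq_of_eqOn_of_covers false hH ha₁ ha₂
      (fun z hz => by simp [legVal, Bool.of_not_eq_false hz])
      fun z hz => congrFun heq ⟨z, hz⟩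
  funext i x
  simpa [legVal] using congrFun hagree (i, x, false)

theorem fBeta_eq_sum_ite_tensorPow (β : Equiv.Perm (Fin p × Fin r × Bool))
    (ρ : Matrix (Fin r → Fin d) (Fin r → Fin d) ℂ) :
    fBeta β ρ = ∑ a, ∑ b,
      if ∀ z, legVal a b z = legVal a b (β z) then ρ.tensorPow (Fin p) a b else 0 := by
  simp only [fBeta, mul_ite, mul_one, mul_zero, Matrix.tensorPow_apply]

end Legs

theorem stmt18_general (p r d : ℕ)
    (β : Equiv.Perm (Fin p × Fin r × Bool)) (hβ : IsPairing β)
    (ρ : Matrix (Fin r → Fin d) (Fin r → Fin d) ℂ)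
    (hρ : ρ.PosSemidef) (hρt : ρ.trace = 1) :
    ‖fBeta β ρ‖ ^ 2 ≤ (d : ℝ) ^ bigBR β := by
  have hinv : ∀ s : Bool, ∀ z ∈ ({z | z.2.2 = s ∧ (β z).2.2 = s} : Finset _),
      β z ∈ ({z | z.2.2 = s ∧ (β z).2.2 = s} : Finset _) := by
    simp [hβ.apply_apply_s18, and_comm]
  obtain ⟨HR, hHR, hcoverR⟩ := hβ.exists_half _ (hinv true)
  obtain ⟨HL, hHL, hcoverL⟩ := hβ.exists_half _ (hinv false)
  have hcard : #HR + #HL = bigBR β := by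
    have := card_left_left_eq_bigBR β
    unfold bigBR at *
    omega
  rw [fBeta_eq_sum_ite_tensorPow]
  calc _ ≤ ((d ^ #HR : ℕ) : ℝ) * (d ^ #HL : ℕ) * ‖(ρ.tensorPow (Fin p)).trace‖ ^ 2 :=
        hρ.tensorPow.norm_sum_ite_sq_le _
          (card_compatible_right_le fun z h₁ h₂ => hcoverR z (by simp [h₁, h₂]))
          (card_compatible_left_le fun z h₁ h₂ => hcoverL z (by simp [h₁, h₂]))
    _ = (d : ℝ) ^ bigBR β := by
        rw [Matrix.trace_tensorPow, hρt, ← hcard]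
        simp [pow_add]

theorem stmt18 (p r d : ℕ) (hp : 1 ≤ p) (hr : 1 ≤ r) (hd : 1 ≤ d)
    (β : Equiv.Perm (Fin p × Fin r × Bool)) (hβ : IsPairing β)
    (ρ : Matrix (Fin r → Fin d) (Fin r → Fin d) ℂ)
    (hρ : ρ.PosSemidef) (hρt : ρ.trace = 1) :
    ‖fBeta β ρ‖ ^ 2 ≤ (d : ℝ) ^ bigBR β :=
  stmt18_general p r d β hβ ρ hρ hρt
end

section
/- Fix integers r, d ≥ 1 and take p = 2, Legs = Fin 2 × Fin r × Bool. Let β be a fixed-point-free involution of Legs of dominant form: for every (i,x) ∈ Fin 2 × Fin r, either β(i,x,false) = (i,x,true) (a horizontal wire), or there exists (j,y) ≠ (i,x) with β(i,x,false) = (j,y,false) and β(i,x,true) = (j,y,true) (a symmetrical bump). Let B_in(β) := card {(i,x) | ∃ y ≠ x, β(i,x,false) = (i,y,false)} (this equals 2♭_in(β), twice the number of non-trespassing bumps, i.e. bumps joining legs with the same first coordinate). Then for every positive semidefinite ρ ∈ M_{d^r}(ℂ) with Tr ρ = 1, one has |f_β(ρ)|² ≤ d^{B_in(β)}. -/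
open ComplexOrder

/-- `B_in(β) = 2♭_in(β)`: the number of left legs belonging to a non-trespassing bump,
i.e. paired by `β` to a left leg with the same first coordinate. -/
def bigBin {r : ℕ} (β : Equiv.Perm (Fin 2 × Fin r × Bool)) : ℕ :=
  (Finset.univ.filter fun ix : Fin 2 × Fin r =>
    ∃ y : Fin r, y ≠ ix.2 ∧ β (ix.1, ix.2, false) = (ix.1, y, false)).card

/-!
Split the legs into row 0 and row 1. For a dominant pairing the constraints of `fBeta` are the
wires and non-trespassing bumps inside each row, and the trespassing bumps joining the rows.
Fixing the labels `s, t` carried by the trespassing bumps on the left and on the right legs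
factorises the contraction as `f_β(ρ) = ∑ s t, G₀ s t * G₁ s t`, where each `Gᵢ` is a compression
`∑ ω, Eωᴴ ρ Eω` of `ρ`, hence positive semidefinite. Cauchy–Schwarz and `‖G‖_F ≤ tr G` for
`G ⪰ 0` give `|f_β(ρ)|² ≤ (tr G₀)² (tr G₁)²`. Finally `tr Gᵢ` sums `ρ` over blocks of index
strings that are constant on each bump of row `i` and fixed elsewhere. With `Bᵢ` the number of
columns of row `i` on a bump, a block has at most `d ^ (Bᵢ / 2)` elements, so
`|ρ_uv| ≤ (ρ_uu + ρ_vv) / 2` gives `tr Gᵢ ≤ d ^ (Bᵢ / 2) tr ρ`; and `B₀ + B₁ = B_in(β)`.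
-/

open Finset Matrix

lemma norm_sum_mul_sq_le {ι 𝕜 : Type*} [RCLike 𝕜] (s : Finset ι) (f g : ι → 𝕜) :
    ‖∑ i ∈ s, f i * g i‖ ^ 2 ≤ (∑ i ∈ s, ‖f i‖ ^ 2) * ∑ i ∈ s, ‖g i‖ ^ 2 := by
  calc ‖∑ i ∈ s, f i * g i‖ ^ 2 ≤ (∑ i ∈ s, ‖f i‖ * ‖g i‖) ^ 2 := by
        gcongr
        exact (norm_sum_le _ _).trans_eq (sum_congr rfl fun i _ => norm_mul _ _)
    _ ≤ _ := sum_mul_sq_le_sq_mul_sq _ _ _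

lemma sum_sum_ite_eq_sum_mul_sum {X Y M R : Type*} [Fintype X] [Fintype Y] [Fintype M]
    [DecidableEq M] [NonUnitalNonAssocSemiring R] (F : X → R) (G : Y → R) (φ : X → M) (ψ : Y → M) :
    ∑ x, ∑ y, (if φ x = ψ y then F x * G y else 0) =
      ∑ m, (∑ x, if φ x = m then F x else 0) * ∑ y, if ψ y = m then G y else 0 := by
  simp only [sum_mul_sum]
  conv_rhs => rw [sum_comm]
  refine sum_congr rfl fun x _ => ?_
  conv_rhs => rw [sum_comm]
  refine sum_congr rfl fun y _ => ?_
  simp [ite_mul, mul_ite]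

lemma sum_sum_fin_two_arrow {U M : Type*} [Fintype U] [AddCommMonoid M]
    (f : (Fin 2 → U) → (Fin 2 → U) → M) :
    ∑ a, ∑ b, f a b = ∑ x : U × U, ∑ y : U × U, f ![x.1, y.1] ![x.2, y.2] := by
  simp only [← (finTwoArrowEquiv U).symm.sum_comp, Fintype.sum_prod_type]
  exact sum_congr rfl fun a₀ _ => sum_comm

namespace Matrix.PosSemidef
variable {n 𝕜 : Type*} [RCLike 𝕜] {A : Matrix n n 𝕜}

lemma norm_apply_sq_le (hA : A.PosSemidef) (i j : n) :
    ‖A i j‖ ^ 2 ≤ RCLike.re (A i i) * RCLike.re (A j j) := by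
  have h := (hA.submatrix ![i, j]).det_nonneg
  rw [det_fin_two] at h
  simp only [submatrix_apply, Matrix.cons_val_zero, Matrix.cons_val_one] at h
  rw [← hA.1.apply j i, ← hA.1.coe_re_apply_self i, ← hA.1.coe_re_apply_self j, RCLike.star_def,
    RCLike.mul_conj] at h
  exact sub_nonneg.mp (RCLike.ofReal_nonneg.mp (by push_cast; exact h))

lemma norm_apply_le (hA : A.PosSemidef) (i j : n) :
    ‖A i j‖ ≤ (RCLike.re (A i i) + RCLike.re (A j j)) / 2 := by
  have hi := RCLike.nonneg_iff.mp (hA.diag_nonneg (i := i))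
  have hj := RCLike.nonneg_iff.mp (hA.diag_nonneg (i := j))
  nlinarith [hA.norm_apply_sq_le i j, sq_nonneg (RCLike.re (A i i) - RCLike.re (A j j)),
    norm_nonneg (A i j)]

lemma sum_norm_sq_le_re_trace_sq [Fintype n] (hA : A.PosSemidef) :
    ∑ i, ∑ j, ‖A i j‖ ^ 2 ≤ RCLike.re A.trace ^ 2 := by
  calc ∑ i, ∑ j, ‖A i j‖ ^ 2 ≤ ∑ i, ∑ j, RCLike.re (A i i) * RCLike.re (A j j) :=
        sum_le_sum fun i _ => sum_le_sum fun j _ => hA.norm_apply_sq_le i j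
    _ = RCLike.re A.trace ^ 2 := by
        rw [sq, trace, map_sum, sum_mul_sum]; rfl

lemma norm_sum_ite_le [Fintype n] (hA : A.PosSemidef) (J : n → n → Prop) [DecidableRel J]
    (hJ : ∀ i j, J i j → J j i) {K : ℝ} (hK : ∀ i, (#{j | J i j} : ℝ) ≤ K) :
    ‖∑ i, ∑ j, if J i j then A i j else 0‖ ≤ K * RCLike.re A.trace := by
  have hdiag : ∀ i, 0 ≤ RCLike.re (A i i) := fun i => (RCLike.nonneg_iff.mp hA.diag_nonneg).1
  have hrow : ∀ J' : n → n → Prop, [DecidableRel J'] → (∀ i, (#{j | J' i j} : ℝ) ≤ K) →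
      ∑ i, ∑ j, (if J' i j then RCLike.re (A i i) else 0) ≤ K * RCLike.re A.trace := by
    intro J' _ hK'
    rw [trace, map_sum, mul_sum]
    refine sum_le_sum fun i _ => ?_
    rw [← sum_filter, sum_const, nsmul_eq_mul]
    exact mul_le_mul_of_nonneg_right (hK' i) (hdiag i)
  have hcol : ∀ i, (#{j | J j i} : ℝ) ≤ K := fun i => by
    simpa only [fun j => show J j i ↔ J i j from ⟨hJ j i, hJ i j⟩] using hK i
  calc ‖∑ i, ∑ j, if J i j then A i j else 0‖
      ≤ ∑ i, ∑ j, if J i j then (RCLike.re (A i i) + RCLike.re (A j j)) / 2 else 0 := by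
        refine (norm_sum_le _ _).trans (sum_le_sum fun i _ => (norm_sum_le _ _).trans
          (sum_le_sum fun j _ => ?_))
        split_ifs
        · exact hA.norm_apply_le i j
        · simp
    _ = (∑ i, ∑ j, (if J i j then RCLike.re (A i i) else 0) +
          ∑ i, ∑ j, (if J j i then RCLike.re (A i i) else 0)) / 2 := by
        rw [sum_comm (f := fun i j => if J j i then RCLike.re (A i i) else 0), ← sum_add_distrib,
          sum_div]
        refine sum_congr rfl fun i _ => ?_
        rw [← sum_add_distrib, sum_div]
        refine sum_congr rfl fun j _ => ?_
        split_ifs <;> ring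
    _ ≤ K * RCLike.re A.trace := by
        linarith [hrow J hK, hrow (fun i j => J j i) hcol]
end Matrix.PosSemidef

section FiberMatrix
variable {U S Ω 𝕜 : Type*} [Fintype U] [RCLike 𝕜] [DecidableEq S] [DecidableEq Ω]

/-- The compression `∑ ω, Eωᴴ * A * Eω`, where `Eω u s = 1` iff `P u ∧ q u = ω ∧ p u = s`. -/
def fiberMatrix (A : Matrix U U 𝕜) (P : U → Prop) [DecidablePred P] (q : U → Ω) (p : U → S) :
    Matrix S S 𝕜 :=
  of fun s t => ∑ u, ∑ v, if P u ∧ P v ∧ q u = q v ∧ p u = s ∧ p v = t then A u v else 0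

variable {A : Matrix U U 𝕜} (P : U → Prop) [DecidablePred P] (q : U → Ω) (p : U → S)

lemma posSemidef_fiberMatrix [Fintype S] [Fintype Ω] (hA : A.PosSemidef) :
    (fiberMatrix A P q p).PosSemidef := by
  let E : Ω → Matrix U S 𝕜 := fun ω => of fun u s => if P u ∧ q u = ω ∧ p u = s then 1 else 0
  have hE : fiberMatrix A P q p = ∑ ω, (E ω)ᴴ * A * E ω := by
    ext s t
    simp only [fiberMatrix, E, of_apply, Matrix.sum_apply, mul_apply, conjTranspose_apply, sum_mul]
    rw [sum_comm]
    conv_rhs => rw [sum_comm]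
    refine sum_congr rfl fun v _ => ?_
    rw [sum_comm]
    refine sum_congr rfl fun u _ => ?_
    by_cases hu : P u <;> by_cases hv : P v <;> simp [hu, hv, ite_and, apply_ite (starRingEnd 𝕜)]
    split_ifs <;> simp
  rw [hE]
  exact posSemidef_sum _ fun ω _ => hA.conjTranspose_mul_mul_same _

lemma trace_fiberMatrix [Fintype S] :
    (fiberMatrix A P q p).trace =
      ∑ u, ∑ v, if P u ∧ P v ∧ q u = q v ∧ p u = p v then A u v else 0 := by
  simp only [trace, Matrix.diag, fiberMatrix, of_apply]
  rw [sum_comm]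
  refine sum_congr rfl fun u _ => ?_
  rw [sum_comm]
  refine sum_congr rfl fun v _ => ?_
  simp [ite_and, eq_comm (a := p v)]

lemma sum_norm_sq_fiberMatrix_le [Fintype S] [Fintype Ω] (hA : A.PosSemidef) {K : ℝ}
    (hK : ∀ ω s, (#{u | P u ∧ q u = ω ∧ p u = s} : ℝ) ≤ K) :
    ∑ s, ∑ t, ‖fiberMatrix A P q p s t‖ ^ 2 ≤ (K * RCLike.re A.trace) ^ 2 := by
  have hG := posSemidef_fiberMatrix P q p hA
  refine hG.sum_norm_sq_le_re_trace_sq.trans (pow_le_pow_left₀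
    (RCLike.nonneg_iff.mp hG.trace_nonneg).1 ?_ 2)
  refine (RCLike.re_le_norm _).trans ?_
  rw [trace_fiberMatrix]
  refine hA.norm_sum_ite_le _ (fun u v h => ⟨h.2.1, h.1, h.2.2.1.symm, h.2.2.2.symm⟩)
    fun u => le_trans (Nat.cast_le.mpr (card_le_card fun v hv => ?_)) (hK (q u) (p u))
  simp only [mem_filter, mem_univ, true_and] at hv ⊢
  exact ⟨hv.2.1, hv.2.2.1.symm, hv.2.2.2.symm⟩
end FiberMatrix

lemma IsPairing.involutive {X : Type*} {α : Equiv.Perm X} (h : IsPairing α) :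
    Function.Involutive α :=
  fun x => by simpa using congrArg (· x) h.1

def IsDominant {p r : ℕ} (β : Equiv.Perm (Fin p × Fin r × Bool)) : Prop :=
  ∀ (i : Fin p) (x : Fin r), β (i, x, false) = (i, x, true) ∨
    ∃ (j : Fin p) (y : Fin r), (j, y) ≠ (i, x) ∧
      β (i, x, false) = (j, y, false) ∧ β (i, x, true) = (j, y, true)

lemma legVal_compatible_iff {p r d : ℕ} {β : Equiv.Perm (Fin p × Fin r × Bool)}
    (hβ : Function.Involutive β) (hdom : IsDominant β) (a b : Fin p → Fin r → Fin d) :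
    (∀ z, legVal a b z = legVal a b (β z)) ↔
      (∀ i x, β (i, x, false) = (i, x, true) → a i x = b i x) ∧
      ∀ i x j y, β (i, x, false) = (j, y, false) → a i x = a j y ∧ b i x = b j y := by
  constructor
  · intro h
    refine ⟨fun i x hw => by simpa [legVal, hw] using h (i, x, false), fun i x j y hb => ?_⟩
    rcases hdom i x with hw | ⟨j', y', -, hF, hT⟩
    · simp [hw] at hb
    · obtain ⟨rfl, rfl⟩ : j' = j ∧ y' = y := by simpa [hF] using hb
      exact ⟨by simpa [legVal, hF] using h (i, x, false),
        by simpa [legVal, hT] using h (i, x, true)⟩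
  · rintro ⟨hw, hb⟩ ⟨i, x, _ | _⟩ <;> rcases hdom i x with h | ⟨j, y, -, hF, hT⟩
    · simpa [legVal, h] using hw i x h
    · simpa [legVal, hF] using (hb i x j y hF).1
    · have hT : β (i, x, true) = (i, x, false) := by rw [← h, hβ]
      simpa [legVal, hT] using (hw i x h).symm
    · simpa [legVal, hT] using (hb i x j y hF).2

section TwoRows

variable {r d : ℕ} (β : Equiv.Perm (Fin 2 × Fin r × Bool))

def IsInBump (i : Fin 2) (x : Fin r) : Prop :=
  ∃ y, y ≠ x ∧ β (i, x, false) = (i, y, false)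

def bumpPartner (i : Fin 2) (x : Fin r) : Fin r := (β (i, x, false)).2.1

def IsBumpInvariant (i : Fin 2) (u : Fin r → Fin d) : Prop :=
  ∀ x y, β (i, x, false) = (i, y, false) → u x = u y

instance (i : Fin 2) : DecidablePred (IsInBump β i) := fun _ => by
  unfold IsInBump; infer_instance

instance (i : Fin 2) : DecidablePred (IsBumpInvariant (d := d) β i) := fun _ => by
  unfold IsBumpInvariant; infer_instance

abbrev WireSite (i : Fin 2) := {x : Fin r // β (i, x, false) = (i, x, true)}

def wireLabel (i : Fin 2) (u : Fin r → Fin d) : WireSite β i → Fin d := fun x => u x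

/-- A trespassing bump, recorded by its column `xy 0` in row 0 and `xy 1` in row 1. -/
abbrev Crossing := {xy : Fin 2 → Fin r // β (0, xy 0, false) = (1, xy 1, false)}

def crossLabel (i : Fin 2) (u : Fin r → Fin d) : Crossing β → Fin d := fun t => u (t.1 i)

/-- The contraction of one copy of `ρ` along the wires and bumps of row `i`, the labels of the
crossings on the left and on the right legs being kept open as the matrix indices. -/
noncomputable def rowMatrix (ρ : Matrix (Fin r → Fin d) (Fin r → Fin d) ℂ) (i : Fin 2) :
    Matrix (Crossing β → Fin d) (Crossing β → Fin d) ℂ :=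
  fiberMatrix ρ (IsBumpInvariant β i) (wireLabel β i) (crossLabel β i)

variable {β}

lemma exists_crossing (hβ : Function.Involutive β) {i j : Fin 2} {x y : Fin r} (hij : i ≠ j)
    (h : β (i, x, false) = (j, y, false)) : ∃ t : Crossing β, t.1 i = x ∧ t.1 j = y := by
  fin_cases i <;> fin_cases j
  · exact absurd rfl hij
  · exact ⟨⟨![x, y], h⟩, rfl, rfl⟩
  · exact ⟨⟨![y, x], by simpa using (congrArg β h).symm.trans (hβ _)⟩, rfl, rfl⟩
  · exact absurd rfl hij

lemma apply_eq_of_crossLabel_eq {u : Fin 2 → Fin r → Fin d}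
    (h : crossLabel β 0 (u 0) = crossLabel β 1 (u 1)) {i j : Fin 2} (hij : i ≠ j) (t : Crossing β) :
    u i (t.1 i) = u j (t.1 j) := by
  fin_cases i <;> fin_cases j
  · exact absurd rfl hij
  · exact congrFun h t
  · exact (congrFun h t).symm
  · exact absurd rfl hij

lemma legVal_compatible_iff_rows (hβ : Function.Involutive β) (hdom : IsDominant β)
    (a b : Fin 2 → Fin r → Fin d) :
    (∀ z, legVal a b z = legVal a b (β z)) ↔
      (∀ i, IsBumpInvariant β i (a i) ∧ IsBumpInvariant β i (b i) ∧
        wireLabel β i (a i) = wireLabel β i (b i)) ∧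
      crossLabel β 0 (a 0) = crossLabel β 1 (a 1) ∧
        crossLabel β 0 (b 0) = crossLabel β 1 (b 1) := by
  rw [legVal_compatible_iff hβ hdom]
  constructor
  · rintro ⟨hw, hb⟩
    exact ⟨fun i => ⟨fun x y h => (hb i x i y h).1, fun x y h => (hb i x i y h).2,
      funext fun x => hw i x x.2⟩, funext fun t => (hb 0 _ 1 _ t.2).1,
      funext fun t => (hb 0 _ 1 _ t.2).2⟩
  · rintro ⟨hrow, ha, hb⟩
    refine ⟨fun i x h => congrFun (hrow i).2.2 ⟨x, h⟩, fun i x j y h => ?_⟩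
    by_cases hij : i = j
    · subst hij
      exact ⟨(hrow i).1 x y h, (hrow i).2.1 x y h⟩
    · obtain ⟨t, rfl, rfl⟩ := exists_crossing hβ hij h
      exact ⟨apply_eq_of_crossLabel_eq ha hij t, apply_eq_of_crossLabel_eq hb hij t⟩

lemma fBeta_eq_sum_rowMatrix_mul (hβ : Function.Involutive β) (hdom : IsDominant β)
    (ρ : Matrix (Fin r → Fin d) (Fin r → Fin d) ℂ) :
    fBeta β ρ = ∑ s, ∑ t, rowMatrix β ρ 0 s t * rowMatrix β ρ 1 s t := by
  let F (i : Fin 2) (x : (Fin r → Fin d) × (Fin r → Fin d)) : ℂ :=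
    if IsBumpInvariant β i x.1 ∧ IsBumpInvariant β i x.2 ∧ wireLabel β i x.1 = wireLabel β i x.2
    then ρ x.1 x.2 else 0
  let φ (i : Fin 2) (x : (Fin r → Fin d) × (Fin r → Fin d)) :=
    (crossLabel β i x.1, crossLabel β i x.2)
  have hrow (i : Fin 2) (s t : Crossing β → Fin d) :
      (∑ x, if φ i x = (s, t) then F i x else 0) = rowMatrix β ρ i s t := by
    simp only [rowMatrix, fiberMatrix, Matrix.of_apply, Fintype.sum_prod_type, φ, F,
      Prod.mk.injEq, ite_and]
    refine sum_congr rfl fun u _ => sum_congr rfl fun v _ => ?_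
    split_ifs <;> simp_all
  calc fBeta β ρ = ∑ x, ∑ y, if φ 0 x = φ 1 y then F 0 x * F 1 y else 0 := by
        rw [fBeta, sum_sum_fin_two_arrow]
        refine sum_congr rfl fun x _ => sum_congr rfl fun y _ => ?_
        simp only [legVal_compatible_iff_rows hβ hdom, Fin.forall_fin_two, Fin.prod_univ_two,
          Matrix.cons_val_zero, Matrix.cons_val_one, φ, F, Prod.mk.injEq]
        split_ifs <;> simp_all
    _ = ∑ s, ∑ t, rowMatrix β ρ 0 s t * rowMatrix β ρ 1 s t := by
        rw [sum_sum_ite_eq_sum_mul_sum, Fintype.sum_prod_type]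
        simp only [hrow]

section Fibers

variable {i : Fin 2} {x : Fin r}

lemma IsInBump.apply_eq (h : IsInBump β i x) : β (i, x, false) = (i, bumpPartner β i x, false) := by
  obtain ⟨y, -, hy⟩ := h
  simp [bumpPartner, hy]

lemma IsInBump.bumpPartner_ne (h : IsInBump β i x) : bumpPartner β i x ≠ x := by
  obtain ⟨y, hyx, hy⟩ := h
  simpa [bumpPartner, hy] using hyx

lemma IsInBump.apply_bumpPartner (hβ : Function.Involutive β) (h : IsInBump β i x) :
    β (i, bumpPartner β i x, false) = (i, x, false) := by
  rw [← h.apply_eq, hβ]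

lemma IsInBump.isInBump_bumpPartner (hβ : Function.Involutive β) (h : IsInBump β i x) :
    IsInBump β i (bumpPartner β i x) :=
  ⟨x, h.bumpPartner_ne.symm, h.apply_bumpPartner hβ⟩

lemma IsInBump.bumpPartner_bumpPartner (hβ : Function.Involutive β) (h : IsInBump β i x) :
    bumpPartner β i (bumpPartner β i x) = x := by
  rw [bumpPartner, h.apply_bumpPartner hβ]

lemma eq_of_eqOn_inBump (hβ : Function.Involutive β) (hdom : IsDominant β)
    {u v : Fin r → Fin d} (hw : wireLabel β i u = wireLabel β i v)
    (hc : crossLabel β i u = crossLabel β i v) (h : ∀ x, IsInBump β i x → u x = v x) : u = v := by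
  funext x
  rcases hdom i x with hx | ⟨j, y, hne, hF, -⟩
  · exact congrFun hw ⟨x, hx⟩
  · by_cases hij : i = j
    · subst hij
      exact h x ⟨y, fun hyx => hne (by rw [hyx]), hF⟩
    · obtain ⟨t, rfl, -⟩ := exists_crossing hβ hij hF
      exact congrFun hc t

lemma eqOn_inBump_of_eqOn_cover (hβ : Function.Involutive β) (c : Fin r → Fin r → Prop)
    (hc : ∀ x y, x ≠ y → c x y ∨ c y x) {u v : Fin r → Fin d}
    (hu : IsBumpInvariant β i u) (hv : IsBumpInvariant β i v)
    (h : ∀ x, IsInBump β i x → c x (bumpPartner β i x) → u x = v x)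
    (hx : IsInBump β i x) : u x = v x := by
  rcases hc x _ hx.bumpPartner_ne.symm with hcx | hcy
  · exact h x hx hcx
  · rw [hu x _ hx.apply_eq, hv x _ hx.apply_eq]
    exact h _ (hx.isInBump_bumpPartner hβ) (by rwa [hx.bumpPartner_bumpPartner hβ])

lemma card_fiber_le_of_cover (hβ : Function.Involutive β) (hdom : IsDominant β)
    (c : Fin r → Fin r → Prop) [DecidableRel c] (hc : ∀ x y, x ≠ y → c x y ∨ c y x)
    (ω : WireSite β i → Fin d) (s : Crossing β → Fin d) :
    #{u | IsBumpInvariant β i u ∧ wireLabel β i u = ω ∧ crossLabel β i u = s} ≤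
      d ^ #{x | IsInBump β i x ∧ c x (bumpPartner β i x)} := by
  let L := ({x | IsInBump β i x ∧ c x (bumpPartner β i x)} : Finset (Fin r))
  calc _ ≤ #(univ : Finset (L → Fin d)) := by
        refine card_le_card_of_injOn (fun u (x : L) => u x) (fun _ _ => mem_coe.mpr (mem_univ _))
          fun u hu v hv huv => ?_
        simp only [coe_filter, mem_univ, true_and] at hu hv
        refine eq_of_eqOn_inBump hβ hdom (hu.2.1.trans hv.2.1.symm) (hu.2.2.trans hv.2.2.symm)
          fun x hx => eqOn_inBump_of_eqOn_cover hβ c hc hu.1 hv.1 (fun x hx hcx => ?_) hx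
        exact congrFun huv ⟨x, by simp [L, hx, hcx]⟩
    _ = d ^ #L := by simp

/-- The smaller ends and the larger ends of the bumps are two covers partitioning the bump legs. -/
lemma card_fiber_sq_le (hβ : Function.Involutive β) (hdom : IsDominant β)
    (ω : WireSite β i → Fin d) (s : Crossing β → Fin d) :
    #{u | IsBumpInvariant β i u ∧ wireLabel β i u = ω ∧ crossLabel β i u = s} ^ 2 ≤
      d ^ #{x | IsInBump β i x} := by
  calc _ ≤ d ^ #{x | IsInBump β i x ∧ x < bumpPartner β i x} *
        d ^ #{x | IsInBump β i x ∧ ¬ x < bumpPartner β i x} := by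
        rw [sq]
        exact Nat.mul_le_mul (card_fiber_le_of_cover hβ hdom _ (fun _ _ h => h.lt_or_gt) ω s)
          (card_fiber_le_of_cover hβ hdom _
            (fun _ _ _ => not_and_or.mp fun h => lt_asymm h.1 h.2) ω s)
    _ = d ^ #{x | IsInBump β i x} := by
        rw [← pow_add, ← filter_filter, ← filter_filter, card_filter_add_card_filter_not]

end Fibers

variable (β) in
lemma bigBin_eq_add :
    bigBin β = #{x | IsInBump β 0 x} + #{x | IsInBump β 1 x} := by
  rw [bigBin, card_filter, Fintype.sum_prod_type, Fin.sum_univ_two, card_filter, card_filter]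
  rfl

lemma sum_norm_sq_rowMatrix_le (hβ : Function.Involutive β) (hdom : IsDominant β)
    {ρ : Matrix (Fin r → Fin d) (Fin r → Fin d) ℂ} (hρ : ρ.PosSemidef) (i : Fin 2) :
    ∑ s, ∑ t, ‖rowMatrix β ρ i s t‖ ^ 2 ≤
      d ^ #{x | IsInBump β i x} * RCLike.re ρ.trace ^ 2 := by
  have hpow : (0 : ℝ) ≤ d ^ #{x | IsInBump β i x} := by positivity
  have h := sum_norm_sq_fiberMatrix_le (IsBumpInvariant β i) (wireLabel β i) (crossLabel β i) hρ
    (K := √((d : ℝ) ^ #{x | IsInBump β i x})) fun ω s => Real.le_sqrt_of_sq_le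
      (by exact_mod_cast card_fiber_sq_le hβ hdom ω s)
  rwa [mul_pow, Real.sq_sqrt hpow] at h

end TwoRows

theorem stmt19_general (r d : ℕ)
    (β : Equiv.Perm (Fin 2 × Fin r × Bool)) (hβ : IsPairing β)
    (hdom : ∀ (i : Fin 2) (x : Fin r),
      β (i, x, false) = (i, x, true) ∨
      ∃ (j : Fin 2) (y : Fin r), (j, y) ≠ (i, x) ∧
        β (i, x, false) = (j, y, false) ∧ β (i, x, true) = (j, y, true))
    (ρ : Matrix (Fin r → Fin d) (Fin r → Fin d) ℂ)
    (hρ : ρ.PosSemidef) (hρt : ρ.trace = 1) :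
    ‖fBeta β ρ‖ ^ 2 ≤ (d : ℝ) ^ bigBin β := by
  have hrow (i : Fin 2) := sum_norm_sq_rowMatrix_le hβ.involutive hdom hρ i
  simp only [hρt, RCLike.one_re, one_pow, mul_one] at hrow
  calc ‖fBeta β ρ‖ ^ 2
      = ‖∑ m : _ × _, rowMatrix β ρ 0 m.1 m.2 * rowMatrix β ρ 1 m.1 m.2‖ ^ 2 := by
        rw [fBeta_eq_sum_rowMatrix_mul hβ.involutive hdom, Fintype.sum_prod_type]
    _ ≤ (∑ m : _ × _, ‖rowMatrix β ρ 0 m.1 m.2‖ ^ 2) *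
          ∑ m : _ × _, ‖rowMatrix β ρ 1 m.1 m.2‖ ^ 2 :=
        norm_sum_mul_sq_le _ _ _
    _ ≤ (d : ℝ) ^ #{x | IsInBump β 0 x} * (d : ℝ) ^ #{x | IsInBump β 1 x} := by
        simp only [Fintype.sum_prod_type]
        gcongr
        exacts [hrow 0, hrow 1]
    _ = (d : ℝ) ^ bigBin β := by rw [bigBin_eq_add, pow_add]

theorem stmt19 (r d : ℕ) (hr : 1 ≤ r) (hd : 1 ≤ d)
    (β : Equiv.Perm (Fin 2 × Fin r × Bool)) (hβ : IsPairing β)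
    (hdom : ∀ (i : Fin 2) (x : Fin r),
      β (i, x, false) = (i, x, true) ∨
      ∃ (j : Fin 2) (y : Fin r), (j, y) ≠ (i, x) ∧
        β (i, x, false) = (j, y, false) ∧ β (i, x, true) = (j, y, true))
    (ρ : Matrix (Fin r → Fin d) (Fin r → Fin d) ℂ)
    (hρ : ρ.PosSemidef) (hρt : ρ.trace = 1) :
    ‖fBeta β ρ‖ ^ 2 ≤ (d : ℝ) ^ bigBin β :=
  stmt19_general r d β hβ hdom ρ hρ hρt
end
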